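/- arXiv:1907.08318 — 5 statements merged into one kernel-verified Lean document; each statement's English description precedes it below -/
import Mathlib

section
/- Let g : E₂ → ℝ ∪ {+∞} be a closed, proper, convex function, let f : E₁ → ℝ ∪ {+∞} be a closed, proper, convex function, and let F : E₁ → E₂ be continuous. Suppose F is convex with respect to −hzn g, i.e. for all x₁, x₂ ∈ E₁ and λ ∈ [0,1] one has F((1−λ)x₁ + λx₂) − [(1−λ)F(x₁) + λF(x₂)] ∈ hzn g. Then the function Φ : E₁ → ℝ ∪ {+∞} defined by Φ(x) = f(x) + g(F(x)) is convex. -/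
open scoped RealInnerProductSpace Pointwise
open Filter

noncomputable section

/-- Convexity of an extended-real-valued function, defined via convexity of its epigraph. -/
def EConvexOn {E : Type*} [AddCommGroup E] [Module ℝ E] (f : E → EReal) : Prop :=
  Convex ℝ {p : E × ℝ | f p.1 ≤ (p.2 : EReal)}

/-- Closedness (lower semicontinuity) of an extended-real-valued function,
defined via closedness of its epigraph. -/
def EClosed {E : Type*} [TopologicalSpace E] (f : E → EReal) : Prop :=
  IsClosed {p : E × ℝ | f p.1 ≤ (p.2 : EReal)}

/-- Properness: the domain is nonempty and the function never takes the value `-∞`. -/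
def EProper {E : Type*} (f : E → EReal) : Prop :=
  (∃ x, f x < ⊤) ∧ ∀ x, f x ≠ ⊥

/-- The (effective) domain of an extended-real-valued function. -/
def edom {E : Type*} (f : E → EReal) : Set E := {x | f x < ⊤}

/-- The Fenchel conjugate. -/
def econj {E : Type*} [NormedAddCommGroup E] [InnerProductSpace ℝ E]
    (f : E → EReal) (y : E) : EReal :=
  ⨆ x, ((⟪y, x⟫ : ℝ) : EReal) - f x

/-- The convex subdifferential of `f` at `x₀`. -/
def esubdiff {E : Type*} [NormedAddCommGroup E] [InnerProductSpace ℝ E]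
    (f : E → EReal) (x₀ : E) : Set E :=
  {w | ∀ x, f x₀ + ((⟪w, x - x₀⟫ : ℝ) : EReal) ≤ f x}

/-- `K` is a cone: it is stable under multiplication by nonnegative scalars. -/
def IsCone {E : Type*} [SMul ℝ E] (K : Set E) : Prop :=
  ∀ ⦃t : ℝ⦄, 0 ≤ t → ∀ ⦃x⦄, x ∈ K → t • x ∈ K

/-- The polar cone `K° = {v : ⟪v,x⟫ ≤ 0 for all x ∈ K}`. -/
def polarCone {E : Type*} [NormedAddCommGroup E] [InnerProductSpace ℝ E] (K : Set E) : Set E :=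
  {v | ∀ x ∈ K, ⟪v, x⟫ ≤ (0 : ℝ)}

/-- The `K`-epigraph of a map `F` with domain `D`. -/
def epiK {E₁ E₂ : Type*} [AddCommGroup E₂] (K : Set E₂) (D : Set E₁) (F : E₁ → E₂) :
    Set (E₁ × E₂) :=
  {p | p.1 ∈ D ∧ p.2 - F p.1 ∈ K}

/-- The graph of a map `F` with domain `D`. -/
def gphF {E₁ E₂ : Type*} (D : Set E₁) (F : E₁ → E₂) : Set (E₁ × E₂) :=
  {p | p.1 ∈ D ∧ p.2 = F p.1}

open Classical in
/-- The scalarization `⟨v,F⟩` of the map `F` with domain `D`: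
it equals `⟪v, F x⟫` on `D` and `+∞` elsewhere. -/
def scal {E₁ E₂ : Type*} [NormedAddCommGroup E₂] [InnerProductSpace ℝ E₂]
    (v : E₂) (D : Set E₁) (F : E₁ → E₂) : E₁ → EReal :=
  fun x => if x ∈ D then ((⟪v, F x⟫ : ℝ) : EReal) else ⊤

open Classical in
/-- The composition `g ∘ F` for a map `F` with domain `D`:
it equals `g (F x)` on `D` and `+∞` elsewhere. -/
def compFn {E₁ E₂ : Type*} (g : E₂ → EReal) (D : Set E₁) (F : E₁ → E₂) : E₁ → EReal :=
  fun x => if x ∈ D then g (F x) else ⊤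

open Classical in
/-- The indicator function of a set: `0` on `S` and `+∞` off `S`. -/
def eindicator {E : Type*} (S : Set E) (x : E) : EReal := if x ∈ S then 0 else ⊤

/-- The support function of a set. -/
def suppFn {E : Type*} [NormedAddCommGroup E] [InnerProductSpace ℝ E] (S : Set E) (y : E) :
    EReal :=
  ⨆ x ∈ S, ((⟪x, y⟫ : ℝ) : EReal)

/-- The support function of a subset of a product of two inner product spaces,
with respect to the natural sum inner product on the product. -/
def suppFn2 {E₁ E₂ : Type*} [NormedAddCommGroup E₁] [InnerProductSpace ℝ E₁]
    [NormedAddCommGroup E₂] [InnerProductSpace ℝ E₂]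
    (S : Set (E₁ × E₂)) (y : E₁ × E₂) : EReal :=
  ⨆ p ∈ S, ((⟪p.1, y.1⟫ + ⟪p.2, y.2⟫ : ℝ) : EReal)

/-- The horizon (recession) cone of a set `C`. -/
def horizonCone {E : Type*} [AddCommGroup E] [Module ℝ E] [TopologicalSpace E] (C : Set E) :
    Set E :=
  {w | ∀ x ∈ C, ∀ t : ℝ, 0 ≤ t → x + t • w ∈ closure C}

/-- The lower semicontinuous hull:
`(cl f)(x) = inf {a : ∃ xₖ → x with f (xₖ) → a}`. -/
def lscHull {E : Type*} [TopologicalSpace E] (f : E → EReal) (x : E) : EReal :=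
  sInf {a : EReal |
    ∃ u : ℕ → E, Tendsto u atTop (nhds x) ∧ Tendsto (fun n => f (u n)) atTop (nhds a)}

variable {E E₁ E₂ : Type*}
  [NormedAddCommGroup E] [InnerProductSpace ℝ E] [FiniteDimensional ℝ E]
  [NormedAddCommGroup E₁] [InnerProductSpace ℝ E₁] [FiniteDimensional ℝ E₁]
  [NormedAddCommGroup E₂] [InnerProductSpace ℝ E₂] [FiniteDimensional ℝ E₂]

/-! If `w` is a horizon direction of a nonempty sublevel set of `g`, then `(w, 0)` is a direction of
recession of the closed convex epigraph of `g`, so `g` does not increase along `w` from any point.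
The defect `F((1-l)x₁ + l x₂) - ((1-l)F x₁ + l F x₂)` is such a direction, so it can be added to
the convex combination of the `F xᵢ` without increasing `g`: `g ∘ F` is convex. Adding `f`, which
never takes the value `-∞`, keeps the epigraph convex. -/

open Topology

/-- The ray `x₀ + t • d` in `S` makes `y + d` the limit of the points
`(1 - 1/(n+1)) • y + 1/(n+1) • (x₀ + (n+1) • d)` of `S`. -/
lemma IsClosed.add_mem_of_ray_subset {E : Type*} [AddCommGroup E] [Module ℝ E]
    [TopologicalSpace E] [IsTopologicalAddGroup E] [ContinuousSMul ℝ E]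
    {S : Set E} (hS : IsClosed S) (hconv : Convex ℝ S) {x₀ d : E}
    (hray : ∀ t : ℝ, 0 ≤ t → x₀ + t • d ∈ S) {y : E} (hy : y ∈ S) :
    y + d ∈ S := by
  set u : ℕ → E := fun n => y + d + (1 / ((n : ℝ) + 1)) • (x₀ - y)
  have hmem : ∀ n, u n ∈ S := by
    intro n
    have hpos : (0 : ℝ) < n + 1 := by positivity
    have hle : 1 / ((n : ℝ) + 1) ≤ 1 := by
      rw [div_le_one hpos]; linarith [(n.cast_nonneg : (0 : ℝ) ≤ n)]
    have hcomb := hconv hy (hray (n + 1) hpos.le) (by linarith) (by positivity)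
      (sub_add_cancel 1 (1 / ((n : ℝ) + 1)))
    convert hcomb using 1
    match_scalars <;> field_simp
    ring
  have htend : Tendsto u atTop (𝓝 (y + d)) := by
    have h := ((tendsto_one_div_add_atTop_nhds_zero_nat (𝕜 := ℝ)).smul_const (x₀ - y)).const_add
      (y + d)
    rwa [zero_smul, add_zero] at h
  exact hS.mem_of_tendsto htend (Eventually.of_forall hmem)

theorem econvexOn_iff_le_combo {E : Type*} [AddCommGroup E] [Module ℝ E] {f : E → EReal} :
    EConvexOn f ↔ ∀ ⦃x y : E⦄ ⦃a b : ℝ⦄, f x ≤ a → f y ≤ b → ∀ ⦃s t : ℝ⦄, 0 ≤ s → 0 ≤ t →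
      s + t = 1 → f (s • x + t • y) ≤ ((s * a + t * b : ℝ) : EReal) := by
  constructor
  · intro hf x y a b hx hy s t hs ht hst
    simpa using hf (x := (x, a)) (y := (y, b)) hx hy hs ht hst
  · rintro hf ⟨x, a⟩ hx ⟨y, b⟩ hy s t hs ht hst
    simpa using hf hx hy hs ht hst

lemma EReal.exists_le_le_of_add_le {u v : EReal} (hu : u ≠ ⊥) (hv : v ≠ ⊥) {r : ℝ}
    (h : u + v ≤ r) : ∃ a b : ℝ, u ≤ a ∧ v ≤ b ∧ a + b ≤ r := by
  induction u using EReal.rec with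
  | bot => exact absurd rfl hu
  | top => simp [EReal.top_add_of_ne_bot hv] at h
  | coe a =>
    induction v using EReal.rec with
    | bot => exact absurd rfl hv
    | top => simp at h
    | coe b => exact ⟨a, b, le_rfl, le_rfl, by exact_mod_cast h⟩

theorem EConvexOn.add {E : Type*} [AddCommGroup E] [Module ℝ E] {f h : E → EReal}
    (hf : EConvexOn f) (hh : EConvexOn h) (hf_bot : ∀ x, f x ≠ ⊥) (hh_bot : ∀ x, h x ≠ ⊥) :
    EConvexOn (fun x => f x + h x) := by
  rw [econvexOn_iff_le_combo] at hf hh ⊢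
  intro x y r₁ r₂ hx hy s t hs ht hst
  obtain ⟨a₁, b₁, hfx, hhx, hr₁⟩ := EReal.exists_le_le_of_add_le (hf_bot x) (hh_bot x) hx
  obtain ⟨a₂, b₂, hfy, hhy, hr₂⟩ := EReal.exists_le_le_of_add_le (hf_bot y) (hh_bot y) hy
  calc f (s • x + t • y) + h (s • x + t • y)
      ≤ ((s * a₁ + t * a₂ : ℝ) : EReal) + ((s * b₁ + t * b₂ : ℝ) : EReal) :=
        add_le_add (hf hfx hfy hs ht hst) (hh hhx hhy hs ht hst)
    _ ≤ ((s * r₁ + t * r₂ : ℝ) : EReal) := by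
        rw [← EReal.coe_add, EReal.coe_le_coe_iff]
        nlinarith [mul_le_mul_of_nonneg_left hr₁ hs, mul_le_mul_of_nonneg_left hr₂ ht]

theorem EConvexOn.le_of_mem_horizonCone {E : Type*} [AddCommGroup E] [Module ℝ E]
    [TopologicalSpace E] [IsTopologicalAddGroup E] [ContinuousSMul ℝ E] {g : E → EReal}
    (hg_conv : EConvexOn g) (hg_closed : EClosed g) {α : ℝ}
    (hα : {y : E | g y ≤ (α : EReal)}.Nonempty) {w : E}
    (hw : w ∈ horizonCone {y : E | g y ≤ (α : EReal)}) {z : E} {r : ℝ} (hz : g z ≤ r) :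
    g (z + w) ≤ r := by
  have hlev_closed : IsClosed {y : E | g y ≤ (α : EReal)} :=
    hg_closed.preimage (continuous_id.prodMk continuous_const)
  obtain ⟨y₀, hy₀⟩ := hα
  have hray : ∀ t : ℝ, 0 ≤ t → (y₀, α) + t • (w, (0 : ℝ)) ∈ {p : E × ℝ | g p.1 ≤ p.2} := by
    intro t ht
    have h := hw y₀ hy₀ t ht
    rw [hlev_closed.closure_eq] at h
    simpa using h
  simpa using hg_closed.add_mem_of_ray_subset hg_conv hray (y := (z, r)) hz

theorem EConvexOn.comp_of_sub_mem_horizonCone {E₁ E₂ : Type*} [AddCommGroup E₁] [Module ℝ E₁]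
    [AddCommGroup E₂] [Module ℝ E₂] [TopologicalSpace E₂] [IsTopologicalAddGroup E₂]
    [ContinuousSMul ℝ E₂] {g : E₂ → EReal} {F : E₁ → E₂}
    (hg_closed : EClosed g) (hg_conv : EConvexOn g) {α : ℝ}
    (hα : {y : E₂ | g y ≤ (α : EReal)}.Nonempty)
    (hF : ∀ x₁ x₂ : E₁, ∀ l : ℝ, l ∈ Set.Icc (0 : ℝ) 1 →
      F ((1 - l) • x₁ + l • x₂) - ((1 - l) • F x₁ + l • F x₂)
        ∈ horizonCone {y : E₂ | g y ≤ (α : EReal)}) :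
    EConvexOn (fun x => g (F x)) := by
  rw [econvexOn_iff_le_combo]
  intro x y a b hx hy s t hs ht hst
  obtain rfl : s = 1 - t := by linarith
  have hw := hF x y t ⟨ht, by linarith⟩
  have h := hg_conv.le_of_mem_horizonCone hg_closed hα hw
    (econvexOn_iff_le_combo.1 hg_conv hx hy hs ht hst)
  rwa [add_sub_cancel] at h

theorem convexity_of_convex_composite_general
    (f : E₁ → EReal) (g : E₂ → EReal) (F : E₁ → E₂)
    (hf_proper : EProper f) (hf_conv : EConvexOn f)
    (hg_closed : EClosed g) (hg_proper : EProper g) (hg_conv : EConvexOn g)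
    (α : ℝ) (hα : {y : E₂ | g y ≤ (α : EReal)}.Nonempty)
    (hFK : ∀ x₁ x₂ : E₁, ∀ l : ℝ, l ∈ Set.Icc (0 : ℝ) 1 →
      F ((1 - l) • x₁ + l • x₂) - ((1 - l) • F x₁ + l • F x₂)
        ∈ horizonCone {y : E₂ | g y ≤ (α : EReal)}) :
    EConvexOn (fun x => f x + g (F x)) :=
  hf_conv.add (hg_conv.comp_of_sub_mem_horizonCone hg_closed hα hFK) hf_proper.2
    fun x => hg_proper.2 (F x)

/-- If `g` is closed, proper and convex, `f` is closed, proper and convex,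
`F` is continuous and convex with respect to `-hzn g`, then `Φ = f + g ∘ F` is convex. -/
theorem convexity_of_convex_composite
    (f : E₁ → EReal) (g : E₂ → EReal) (F : E₁ → E₂)
    (hf_closed : EClosed f) (hf_proper : EProper f) (hf_conv : EConvexOn f)
    (hg_closed : EClosed g) (hg_proper : EProper g) (hg_conv : EConvexOn g)
    (hF_cont : Continuous F)
    (α : ℝ) (hα : {y : E₂ | g y ≤ (α : EReal)}.Nonempty)
    (hFK : ∀ x₁ x₂ : E₁, ∀ l : ℝ, l ∈ Set.Icc (0 : ℝ) 1 →
      F ((1 - l) • x₁ + l • x₂) - ((1 - l) • F x₁ + l • F x₂)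
        ∈ horizonCone {y : E₂ | g y ≤ (α : EReal)}) :
    EConvexOn (fun x => f x + g (F x)) :=
  convexity_of_convex_composite_general f g F hf_proper hf_conv hg_closed hg_proper hg_conv α hα hFK
end
end

section
/- Let K ⊆ E₂ be a convex cone and let F be a proper K-convex map with domain dom F ⊆ E₁. Then ri(epi_K F) = {(x,v) ∈ E₁ × E₂ : x ∈ ri(dom F), v − F(x) ∈ ri K}. In particular, if dom F = E₁, then ri(epi_K F) = {(x,v) : v − F(x) ∈ ri K}. -/
open scoped RealInnerProductSpace Pointwise
open Filter

noncomputable section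

variable {E E₁ E₂ : Type*}
  [NormedAddCommGroup E] [InnerProductSpace ℝ E] [FiniteDimensional ℝ E]
  [NormedAddCommGroup E₁] [InnerProductSpace ℝ E₁] [FiniteDimensional ℝ E₁]
  [NormedAddCommGroup E₂] [InnerProductSpace ℝ E₂] [FiniteDimensional ℝ E₂]

/-!
For a convex set `C ⊆ V × W`, a point `(x, v)` lies in `ri C` iff `x` lies in the relative
interior of the projection of `C` and `v` in the relative interior of the fibre of `C` over `x`
(Rockafellar, Theorem 6.8). Both directions rest on the prolongation characterisation of
relative interior points (Theorem 6.4): `z ∈ ri C` iff every segment of `C` ending at `z` can be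
extended beyond `z` inside `C`. For the `K`-epigraph the projection is `D` (if `K ≠ ∅`) and the
fibre over `x ∈ D` is the translate `F x + K`, whose relative interior is `F x + ri K`.
-/

open Set AffineMap Topology

section Torsor

variable {𝕜 V P : Type*} [Ring 𝕜] [AddCommGroup V] [Module 𝕜 V] [TopologicalSpace P]
  [AddTorsor V P] {s : Set P} {x : P}

theorem mem_intrinsicInterior_iff_mem_nhdsWithin :
    x ∈ intrinsicInterior 𝕜 s ↔ x ∈ s ∧ s ∈ 𝓝[affineSpan 𝕜 s] x := by
  rw [mem_intrinsicInterior]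
  constructor
  · rintro ⟨y, hy, rfl⟩
    exact ⟨mem_preimage.1 (interior_subset hy),
      preimage_coe_mem_nhds_subtype.1 (mem_interior_iff_mem_nhds.1 hy)⟩
  · rintro ⟨hxs, hnhds⟩
    exact ⟨⟨x, subset_affineSpan 𝕜 s hxs⟩,
      mem_interior_iff_mem_nhds.2 (preimage_coe_mem_nhds_subtype.2 hnhds), rfl⟩

theorem intrinsicInterior_univ : intrinsicInterior 𝕜 (univ : Set P) = univ :=
  eq_univ_of_forall fun _ => interior_subset_intrinsicInterior (by rw [interior_univ]; trivial)

end Torsor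

theorem intrinsicInterior_preimage_sub_const {𝕜 V : Type*} [NormedField 𝕜]
    [NormedAddCommGroup V] [NormedSpace 𝕜 V] (a : V) (s : Set V) :
    intrinsicInterior 𝕜 ((· - a) ⁻¹' s) = (· - a) ⁻¹' intrinsicInterior 𝕜 s := by
  have htr : ∀ t : Set V, (· - a) ⁻¹' t = (a + ·) '' t := fun t => by
    rw [image_add_left]; ext; simp [sub_eq_neg_add]
  simpa [htr] using (AffineIsometryEquiv.constVAdd 𝕜 V a).toAffineIsometry.intrinsicInterior_image s

theorem one_sub_inv_mem_Ioc {μ : ℝ} (hμ : 1 < μ) : 1 - μ⁻¹ ∈ Ioc 0 1 :=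
  ⟨sub_pos.2 (inv_lt_one_of_one_lt₀ hμ), sub_le_self _ (inv_nonneg.2 (zero_le_one.trans hμ.le))⟩

theorem AffineMap.lineMap_lineMap_one_sub_inv {𝕜 V : Type*} [Field 𝕜] [AddCommGroup V]
    [Module 𝕜 V] (a z : V) {μ : 𝕜} (hμ : μ ≠ 0) :
    lineMap (lineMap a z μ) a (1 - μ⁻¹) = z := by
  simp only [lineMap_apply_module']
  match_scalars <;> field_simp <;> ring

section Convex

variable {V W : Type*} [NormedAddCommGroup V] [NormedSpace ℝ V] [NormedAddCommGroup W]
  [NormedSpace ℝ W] {s : Set V}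

theorem Convex.lineMap_mem_intrinsicInterior (hs : Convex ℝ s) {x y : V} (hy : y ∈ s)
    (hx : x ∈ intrinsicInterior ℝ s) {t : ℝ} (ht : t ∈ Ioc 0 1) :
    lineMap y x t ∈ intrinsicInterior ℝ s := by
  rw [mem_intrinsicInterior_iff_mem_nhdsWithin] at hx ⊢
  refine ⟨hs.lineMap_mem hy hx.1 ⟨ht.1.le, ht.2⟩, ?_⟩
  obtain ⟨U, hU, hUs⟩ := mem_nhdsWithin_iff_exists_mem_nhds_inter.1 hx.2
  -- the homothety centred at `y ∈ s` with ratio `t` is open, maps `s` into itself, and its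
  -- inverse preserves `affineSpan ℝ s`
  rw [← homothety_eq_lineMap]
  refine mem_nhdsWithin_iff_exists_mem_nhds_inter.2
    ⟨homothety y t '' U, (homothety_isOpenMap y t ht.1.ne').image_mem_nhds hU, ?_⟩
  rintro _ ⟨⟨u, hu, rfl⟩, huA⟩
  have hu_eq : lineMap y (homothety y t u) t⁻¹ = u := by
    rw [← homothety_eq_lineMap, ← homothety_mul_apply, inv_mul_cancel₀ ht.1.ne', homothety_one,
      AffineMap.id_apply]
  have huA' : u ∈ affineSpan ℝ s := hu_eq ▸ AffineMap.lineMap_mem _ (subset_affineSpan ℝ s hy) huA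
  rw [homothety_eq_lineMap]
  exact hs.lineMap_mem hy (hUs ⟨hu, huA'⟩) ⟨ht.1.le, ht.2⟩

theorem Convex.mem_intrinsicInterior_of_lineMap_mem (hs : Convex ℝ s) {a z : V}
    (ha : a ∈ intrinsicInterior ℝ s) {μ : ℝ} (hμ : 1 < μ) (hz : lineMap a z μ ∈ s) :
    z ∈ intrinsicInterior ℝ s := by
  rw [← lineMap_lineMap_one_sub_inv a z (zero_lt_one.trans hμ).ne']
  exact hs.lineMap_mem_intrinsicInterior hz ha (one_sub_inv_mem_Ioc hμ)

variable [FiniteDimensional ℝ V]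

theorem Convex.mem_intrinsicInterior_iff_forall_exists_lineMap_mem (hs : Convex ℝ s) {z : V} :
    z ∈ intrinsicInterior ℝ s ↔ z ∈ s ∧ ∀ y ∈ s, ∃ μ : ℝ, 1 < μ ∧ lineMap y z μ ∈ s := by
  constructor
  · intro hz
    obtain ⟨hzs, hnhds⟩ := mem_intrinsicInterior_iff_mem_nhdsWithin.1 hz
    refine ⟨hzs, fun y hy => ?_⟩
    have hlim : Tendsto (lineMap y z) (𝓝[>] (1 : ℝ)) (𝓝[affineSpan ℝ s] z) :=
      tendsto_nhdsWithin_iff.2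
        ⟨(lineMap_continuous.tendsto' 1 z (lineMap_apply_one y z)).mono_left nhdsWithin_le_nhds,
          Eventually.of_forall fun μ =>
            AffineMap.lineMap_mem μ (subset_affineSpan ℝ s hy) (subset_affineSpan ℝ s hzs)⟩
    obtain ⟨μ, hμs, hμ⟩ := ((hlim.eventually hnhds).and self_mem_nhdsWithin).exists
    exact ⟨μ, hμ, hμs⟩
  · rintro ⟨hz, hext⟩
    obtain ⟨a, ha⟩ := Set.Nonempty.intrinsicInterior hs ⟨z, hz⟩
    obtain ⟨μ, hμ, hμs⟩ := hext a (intrinsicInterior_subset ha)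
    exact hs.mem_intrinsicInterior_of_lineMap_mem ha hμ hμs

variable [FiniteDimensional ℝ W]

theorem Convex.mk_mem_intrinsicInterior_iff {C : Set (V × W)} (hC : Convex ℝ C) {x : V} {v : W} :
    (x, v) ∈ intrinsicInterior ℝ C ↔
      x ∈ intrinsicInterior ℝ (Prod.fst '' C) ∧ v ∈ intrinsicInterior ℝ {w | (x, w) ∈ C} := by
  have hfst : Convex ℝ (Prod.fst '' C) := hC.linear_image (LinearMap.fst ℝ V W)
  have hfiber : Convex ℝ {w | (x, w) ∈ C} := fun u hu w hw a b ha hb hab => by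
    simpa [Prod.smul_mk, Prod.mk_add_mk, ← add_smul, hab] using hC hu hw ha hb hab
  have hline : ∀ (u w : W) (μ : ℝ), lineMap (x, u) (x, w) μ = (x, lineMap u w μ) :=
    fun u w μ => Prod.ext (lineMap_same_apply x μ) rfl
  rw [hfst.mem_intrinsicInterior_iff_forall_exists_lineMap_mem,
    hfiber.mem_intrinsicInterior_iff_forall_exists_lineMap_mem]
  constructor
  · rw [hC.mem_intrinsicInterior_iff_forall_exists_lineMap_mem]
    rintro ⟨hxv, hext⟩
    refine ⟨⟨mem_image_of_mem _ hxv, ?_⟩, hxv, fun u hu => ?_⟩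
    · rintro _ ⟨q, hq, rfl⟩
      obtain ⟨μ, hμ, hμC⟩ := hext q hq
      exact ⟨μ, hμ, _, hμC, fst_lineMap _ _ _⟩
    · obtain ⟨μ, hμ, hμC⟩ := hext (x, u) hu
      exact ⟨μ, hμ, by rwa [hline] at hμC⟩
  · rintro ⟨⟨-, hx⟩, hvC, hv⟩
    obtain ⟨p, hp⟩ := Set.Nonempty.intrinsicInterior hC ⟨_, hvC⟩
    obtain ⟨μ, hμ, q, hq, hqx⟩ := hx p.1 (mem_image_of_mem _ (intrinsicInterior_subset hp))
    -- `q` lies beyond `x` on the ray from `p`, so going back from `q` towards `p` hits `x`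
    have hz : (x, (lineMap q p (1 - μ⁻¹)).2) ∈ intrinsicInterior ℝ C := by
      convert hC.lineMap_mem_intrinsicInterior hq hp (one_sub_inv_mem_Ioc hμ)
      rw [fst_lineMap, hqx, lineMap_lineMap_one_sub_inv _ _ (zero_lt_one.trans hμ).ne']
    obtain ⟨ν, hν, hνC⟩ := hv _ (intrinsicInterior_subset hz :)
    exact hC.mem_intrinsicInterior_of_lineMap_mem hz hν (by rwa [hline])

end Convex

section Epigraph

variable {V W : Type*} [AddCommGroup W] {K : Set W} {D : Set V} {F : V → W}

theorem fst_image_epiK (hK : K.Nonempty) : Prod.fst '' epiK K D F = D := by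
  obtain ⟨k, hk⟩ := hK
  refine subset_antisymm (image_subset_iff.2 fun p hp => hp.1) fun x hx => ⟨(x, k + F x), ?_, rfl⟩
  simpa [epiK] using ⟨hx, hk⟩

theorem setOf_mk_mem_epiK {x : V} (hx : x ∈ D) :
    {v | (x, v) ∈ epiK K D F} = (· - F x) ⁻¹' K := by
  ext v
  simp [epiK, hx]

end Epigraph

theorem relativeInterior_K_epigraph_general
    (K : Set E₂) (D : Set E₁) (F : E₁ → E₂)
    (hF : Convex ℝ (epiK K D F)) :
    intrinsicInterior ℝ (epiK K D F)
      = {p : E₁ × E₂ | p.1 ∈ intrinsicInterior ℝ D ∧ p.2 - F p.1 ∈ intrinsicInterior ℝ K} ∧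
    (D = Set.univ →
      intrinsicInterior ℝ (epiK K D F)
        = {p : E₁ × E₂ | p.2 - F p.1 ∈ intrinsicInterior ℝ K}) := by
  have hri : intrinsicInterior ℝ (epiK K D F)
      = {p : E₁ × E₂ | p.1 ∈ intrinsicInterior ℝ D ∧ p.2 - F p.1 ∈ intrinsicInterior ℝ K} := by
    rcases K.eq_empty_or_nonempty with rfl | hK
    · simp [epiK]
    ext ⟨x, v⟩
    rw [hF.mk_mem_intrinsicInterior_iff, fst_image_epiK hK]
    refine and_congr_right fun hx => ?_
    rw [setOf_mk_mem_epiK (intrinsicInterior_subset hx), intrinsicInterior_preimage_sub_const]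
    rfl
  refine ⟨hri, fun hD => ?_⟩
  rw [hri, hD, intrinsicInterior_univ]
  simp

/-- Relative interior of the `K`-epigraph of a proper `K`-convex map. -/
theorem relativeInterior_K_epigraph
    (K : Set E₂) (hK_cone : IsCone K) (hK_conv : Convex ℝ K)
    (D : Set E₁) (hD : D.Nonempty) (F : E₁ → E₂)
    (hF : Convex ℝ (epiK K D F)) :
    intrinsicInterior ℝ (epiK K D F)
      = {p : E₁ × E₂ | p.1 ∈ intrinsicInterior ℝ D ∧ p.2 - F p.1 ∈ intrinsicInterior ℝ K} ∧
    (D = Set.univ →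
      intrinsicInterior ℝ (epiK K D F)
        = {p : E₁ × E₂ | p.2 - F p.1 ∈ intrinsicInterior ℝ K}) :=
  relativeInterior_K_epigraph_general K D F hF
end
end

section
/- Let K ⊆ E₂ be a closed, convex cone, let F be a map with nonempty domain dom F ⊆ E₁ and values in E₂ such that the scalarization ⟨v,F⟩ is closed, proper and convex for every v ∈ −K°, and let g : E₂ → ℝ ∪ {+∞} be closed, proper, convex and K-increasing. Then the composite function g ∘ F is closed and convex. If, in addition, rge F ∩ dom g ≠ ∅, then g ∘ F is closed, proper and convex. -/
open scoped RealInnerProductSpace Pointwise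
open Filter

noncomputable section

variable {E E₁ E₂ : Type*}
  [NormedAddCommGroup E] [InnerProductSpace ℝ E] [FiniteDimensional ℝ E]
  [NormedAddCommGroup E₁] [InnerProductSpace ℝ E₁] [FiniteDimensional ℝ E₁]
  [NormedAddCommGroup E₂] [InnerProductSpace ℝ E₂] [FiniteDimensional ℝ E₂]


/-! A closed proper convex `g` is the pointwise supremum of its affine minorants
`z ↦ ⟪v, z⟫ - α` (Fenchel–Moreau, by separating points from the epigraph). If `g` is
`K`-increasing, every such slope `v` lies in `-K°`, so `g ∘ F` is the supremum of the closed
convex functions `⟨v, F⟩ - α`. -/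

lemma nonneg_of_forall_le_add_mul {a b c : ℝ} (h : ∀ t, 0 ≤ t → a ≤ b + c * t) : 0 ≤ c := by
  by_contra! hc
  have h₀ := h 0 le_rfl
  have ht := h ((b - a + 1) / -c) (div_nonneg (by linarith) (by linarith))
  have hct : c * ((b - a + 1) / -c) = -(b - a + 1) := by field_simp [hc.ne]
  linarith

section Epigraph

variable {X : Type*}

lemma EClosed.iSup [TopologicalSpace X] {ι : Sort*} {f : ι → X → EReal}
    (hf : ∀ i, EClosed (f i)) : EClosed fun x => ⨆ i, f i x := by
  have hepi : {p : X × ℝ | ⨆ i, f i p.1 ≤ (p.2 : EReal)} = ⋂ i, {p | f i p.1 ≤ (p.2 : EReal)} := by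
    ext p
    simp only [Set.mem_ofPred_eq, Set.mem_iInter, iSup_le_iff]
  rw [EClosed, hepi]
  exact isClosed_iInter hf

lemma EConvexOn.iSup [AddCommGroup X] [Module ℝ X] {ι : Sort*} {f : ι → X → EReal}
    (hf : ∀ i, EConvexOn (f i)) : EConvexOn fun x => ⨆ i, f i x := by
  have hepi : {p : X × ℝ | ⨆ i, f i p.1 ≤ (p.2 : EReal)} = ⋂ i, {p | f i p.1 ≤ (p.2 : EReal)} := by
    ext p
    simp only [Set.mem_ofPred_eq, Set.mem_iInter, iSup_le_iff]
  rw [EConvexOn, hepi]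
  exact convex_iInter hf

lemma setOf_sub_coe_le_eq_preimage [AddCommGroup X] (f : X → EReal) (r : ℝ) :
    {p : X × ℝ | f p.1 - r ≤ (p.2 : EReal)} =
      (· + ((0 : X), r)) ⁻¹' {p : X × ℝ | f p.1 ≤ (p.2 : EReal)} := by
  ext p
  simp only [Set.mem_ofPred_eq, Set.mem_preimage, Prod.fst_add, Prod.snd_add, add_zero,
    EReal.coe_add]
  exact EReal.sub_le_iff_le_add (Or.inl (EReal.coe_ne_bot r)) (Or.inl (EReal.coe_ne_top r))

lemma EClosed.sub_const [TopologicalSpace X] [AddCommGroup X] [ContinuousAdd X] {f : X → EReal}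
    (hf : EClosed f) (r : ℝ) : EClosed fun x => f x - r := by
  rw [EClosed, setOf_sub_coe_le_eq_preimage]
  exact hf.preimage (continuous_add_const _)

lemma EConvexOn.sub_const [AddCommGroup X] [Module ℝ X] {f : X → EReal} (hf : EConvexOn f)
    (r : ℝ) : EConvexOn fun x => f x - r := by
  rw [EConvexOn, setOf_sub_coe_le_eq_preimage]
  exact hf.translate_preimage_left _

lemma EProper.exists_eq_coe {f : X → EReal} (hf : EProper f) : ∃ x, ∃ r : ℝ, f x = r := by
  obtain ⟨x, hx⟩ := hf.1
  exact ⟨x, _, (EReal.coe_toReal hx.ne (hf.2 x)).symm⟩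

lemma eproper_compFn {Y : Type*} {g : Y → EReal} (hg : ∀ y, g y ≠ ⊥) {D : Set X} {F : X → Y}
    (hD : (F '' D ∩ edom g).Nonempty) : EProper (compFn g D F) := by
  obtain ⟨_, ⟨x, hx, rfl⟩, hFx : g (F x) < ⊤⟩ := hD
  refine ⟨⟨x, by simpa only [compFn, if_pos hx] using hFx⟩, fun z => ?_⟩
  unfold compFn
  split_ifs
  exacts [hg _, top_ne_bot]

end Epigraph

section Hilbert

variable {H : Type*} [NormedAddCommGroup H] [InnerProductSpace ℝ H]

/-- The affine minorants `z ↦ ⟪v, z⟫ - α` of `g`, encoded by their pairs `(v, α)`. -/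
def affineMinorants (g : H → EReal) : Set (H × ℝ) :=
  {m | ∀ z, ((⟪m.1, z⟫ - m.2 : ℝ) : EReal) ≤ g z}

lemma ContinuousLinearMap.exists_prod_real_eq_inner_add_mul [CompleteSpace H]
    (f : StrongDual ℝ (H × ℝ)) : ∃ (w : H) (c : ℝ), ∀ z s, f (z, s) = ⟪w, z⟫ + c * s := by
  refine ⟨(InnerProductSpace.toDual ℝ H).symm (f.comp (ContinuousLinearMap.inl ℝ H ℝ)),
    f (0, 1), fun z s => ?_⟩
  have hsplit : (z, s) = (z, (0 : ℝ)) + s • ((0 : H), (1 : ℝ)) := by simp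
  rw [InnerProductSpace.toDual_symm_apply, hsplit, map_add, map_smul, smul_eq_mul, mul_comm]
  rfl

lemma exists_separation_of_lt [CompleteSpace H] {g : H → EReal} (hcl : EClosed g)
    (hcv : EConvexOn g) {y : H} {b : ℝ} (hb : (b : EReal) < g y) :
    ∃ (w : H) (c u : ℝ), ⟪w, y⟫ + c * b < u ∧ ∀ z (s : ℝ), g z ≤ s → u < ⟪w, z⟫ + c * s := by
  obtain ⟨f, u, hfy, hepi⟩ := geometric_hahn_banach_point_closed hcv hcl (x := (y, b)) hb.not_ge
  obtain ⟨w, c, hf⟩ := f.exists_prod_real_eq_inner_add_mul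
  exact ⟨w, c, u, hf y b ▸ hfy, fun z s hzs => hf z s ▸ hepi (z, s) hzs⟩

variable {g : H → EReal} {w : H} {c u : ℝ}

lemma nonneg_of_separation {y₀ : H} {s₀ : ℝ} (hy₀ : g y₀ ≤ s₀)
    (hsep : ∀ z (s : ℝ), g z ≤ s → u < ⟪w, z⟫ + c * s) : 0 ≤ c :=
  nonneg_of_forall_le_add_mul (a := u) (b := ⟪w, y₀⟫ + c * s₀) fun t ht => by
    have := hsep y₀ (s₀ + t) (hy₀.trans (by exact_mod_cast le_add_of_nonneg_right ht))
    linarith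

lemma mem_affineMinorants_of_separation (hc : 0 < c)
    (hsep : ∀ z (s : ℝ), g z ≤ s → u < ⟪w, z⟫ + c * s) :
    (-c⁻¹ • w, -(u / c)) ∈ affineMinorants g := by
  intro z
  rw [← EReal.le_of_forall_lt_iff_le]
  intro s hs
  have := hsep z s hs.le
  rw [EReal.coe_le_coe_iff, real_inner_smul_left]
  field_simp
  linarith

lemma sub_smul_mem_affineMinorants {m : H × ℝ} (hm : m ∈ affineMinorants g) {t : ℝ}
    (ht : 0 ≤ t) (hsep : ∀ z (s : ℝ), g z ≤ s → u < ⟪w, z⟫) :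
    (m.1 - t • w, m.2 - t * u) ∈ affineMinorants g := by
  intro z
  rw [← EReal.le_of_forall_lt_iff_le]
  intro s hs
  have hwz := hsep z s hs.le
  have hmz : ⟪m.1, z⟫ - m.2 ≤ s := by exact_mod_cast (hm z).trans hs.le
  rw [EReal.coe_le_coe_iff, inner_sub_left, real_inner_smul_left]
  nlinarith

lemma exists_mem_affineMinorants_lt_of_separation {m₀ : H × ℝ} (hm₀ : m₀ ∈ affineMinorants g)
    {y : H} {b : ℝ} (hc : 0 ≤ c) (hy : ⟪w, y⟫ + c * b < u)
    (hsep : ∀ z (s : ℝ), g z ≤ s → u < ⟪w, z⟫ + c * s) :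
    ∃ m ∈ affineMinorants g, b < ⟪m.1, y⟫ - m.2 := by
  rcases hc.lt_or_eq with hc | rfl
  · refine ⟨_, mem_affineMinorants_of_separation hc hsep, ?_⟩
    have hval : -c⁻¹ * ⟪w, y⟫ - -(u / c) = (u - ⟪w, y⟫) / c := by field_simp; ring
    rw [real_inner_smul_left, hval, lt_div_iff₀ hc]
    linarith
  · -- a vertical separating hyperplane only tilts an existing minorant
    obtain ⟨n, hn⟩ := exists_nat_gt ((b - (⟪m₀.1, y⟫ - m₀.2)) / (u - ⟪w, y⟫))
    have hdom (z : H) (s : ℝ) (hs : g z ≤ s) : u < ⟪w, z⟫ := by simpa using hsep z s hs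
    refine ⟨_, sub_smul_mem_affineMinorants hm₀ n.cast_nonneg hdom, ?_⟩
    rw [div_lt_iff₀ (by linarith)] at hn
    rw [inner_sub_left, real_inner_smul_left]
    linarith

variable [CompleteSpace H]

lemma affineMinorants_nonempty (hcl : EClosed g) (hcv : EConvexOn g) (hpr : EProper g) :
    (affineMinorants g).Nonempty := by
  obtain ⟨y₀, r₀, hy₀⟩ := hpr.exists_eq_coe
  obtain ⟨w, c, u, hy, hsep⟩ :=
    exists_separation_of_lt hcl hcv (b := r₀ - 1) (hy₀ ▸ EReal.coe_lt_coe (sub_one_lt r₀))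
  have hc : 0 < c := by
    have := hsep y₀ r₀ hy₀.le
    linarith
  exact ⟨_, mem_affineMinorants_of_separation hc hsep⟩

lemma exists_mem_affineMinorants_lt (hcl : EClosed g) (hcv : EConvexOn g) (hpr : EProper g)
    {y : H} {b : ℝ} (hb : (b : EReal) < g y) : ∃ m ∈ affineMinorants g, b < ⟪m.1, y⟫ - m.2 := by
  obtain ⟨y₀, r₀, hy₀⟩ := hpr.exists_eq_coe
  obtain ⟨m₀, hm₀⟩ := affineMinorants_nonempty hcl hcv hpr
  obtain ⟨w, c, u, hy, hsep⟩ := exists_separation_of_lt hcl hcv hb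
  exact exists_mem_affineMinorants_lt_of_separation hm₀ (nonneg_of_separation hy₀.le hsep) hy hsep

theorem eq_iSup_affineMinorants (hcl : EClosed g) (hcv : EConvexOn g) (hpr : EProper g) (y : H) :
    g y = ⨆ m : affineMinorants g, ((⟪m.1.1, y⟫ - m.1.2 : ℝ) : EReal) := by
  refine le_antisymm ?_ (iSup_le fun m => m.2 y)
  by_contra! hlt
  obtain ⟨b, hb_sup, hb_g⟩ := EReal.exists_between_coe_real hlt
  obtain ⟨m, hm, hbm⟩ := exists_mem_affineMinorants_lt hcl hcv hpr hb_g
  have hle := le_iSup (fun m : affineMinorants g => ((⟪m.1.1, y⟫ - m.1.2 : ℝ) : EReal)) ⟨m, hm⟩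
  exact hle.not_gt (hb_sup.trans (EReal.coe_lt_coe hbm))

end Hilbert

section Composite

variable {X Y : Type*} [NormedAddCommGroup Y] [InnerProductSpace ℝ Y] {g : Y → EReal}

lemma neg_polarCone_of_mem_affineMinorants {K : Set Y} (hK : IsCone K)
    (hg_mono : ∀ u v : Y, v - u ∈ K → g u ≤ g v) {y₀ : Y} (hy₀ : g y₀ < ⊤) {m : Y × ℝ}
    (hm : m ∈ affineMinorants g) : m.1 ∈ -polarCone K := by
  intro x hx
  rw [inner_neg_left, neg_nonpos]
  obtain ⟨r₀, hr₀, -⟩ := EReal.exists_between_coe_real hy₀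
  refine nonneg_of_forall_le_add_mul (a := ⟪m.1, y₀⟫ - m.2 - r₀) (b := 0) fun t ht => ?_
  have hdec : g (y₀ - t • x) ≤ g y₀ := hg_mono _ _ (by simpa using hK ht hx)
  have hle : ⟪m.1, y₀ - t • x⟫ - m.2 < r₀ := by
    exact_mod_cast ((hm _).trans hdec).trans_lt hr₀
  rw [inner_sub_right, real_inner_smul_right] at hle
  linarith

lemma compFn_eq_iSup_scal_sub [CompleteSpace Y] (hcl : EClosed g) (hcv : EConvexOn g)
    (hpr : EProper g) (D : Set X) (F : X → Y) (x : X) :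
    compFn g D F x = ⨆ m : affineMinorants g, scal m.1.1 D F x - m.1.2 := by
  by_cases hx : x ∈ D
  · simp only [compFn, scal, if_pos hx, ← EReal.coe_sub]
    exact eq_iSup_affineMinorants hcl hcv hpr (F x)
  · have := (affineMinorants_nonempty hcl hcv hpr).to_subtype
    simp only [compFn, scal, if_neg hx, EReal.top_sub_coe, iSup_const]

end Composite

theorem composite_closed_proper_convex_general
    (K : Set E₂) (hK_cone : IsCone K)
    (D : Set E₁) (F : E₁ → E₂)
    (hF_scal : ∀ v ∈ -polarCone K,
      EClosed (scal v D F) ∧ EProper (scal v D F) ∧ EConvexOn (scal v D F))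
    (g : E₂ → EReal) (hg_closed : EClosed g) (hg_proper : EProper g) (hg_conv : EConvexOn g)
    (hg_mono : ∀ u v : E₂, v - u ∈ K → g u ≤ g v) :
    EClosed (compFn g D F) ∧ EConvexOn (compFn g D F) ∧
    ((F '' D ∩ edom g).Nonempty →
      EClosed (compFn g D F) ∧ EProper (compFn g D F) ∧ EConvexOn (compFn g D F)) := by
  have hrep : compFn g D F = fun x => ⨆ m : affineMinorants g, scal m.1.1 D F x - m.1.2 :=
    funext (compFn_eq_iSup_scal_sub hg_closed hg_conv hg_proper D F)
  obtain ⟨y₀, hy₀⟩ := hg_proper.1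
  have hscal (m : affineMinorants g) := hF_scal _
    (neg_polarCone_of_mem_affineMinorants hK_cone hg_mono hy₀ m.2)
  have hcl : EClosed (compFn g D F) := hrep ▸ EClosed.iSup fun m => (hscal m).1.sub_const _
  have hcv : EConvexOn (compFn g D F) :=
    hrep ▸ EConvexOn.iSup fun m => (hscal m).2.2.sub_const _
  exact ⟨hcl, hcv, fun hne => ⟨hcl, eproper_compFn hg_proper.2 hne, hcv⟩⟩

/-- For a closed convex cone `K`, a map `F` whose scalarizations over `-K°`
are closed, proper and convex, and a closed, proper, convex, `K`-increasing `g`, the composite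
`g ∘ F` is closed and convex; if moreover `rge F ∩ dom g ≠ ∅`, it is closed, proper and convex. -/
theorem composite_closed_proper_convex
    (K : Set E₂) (hK_cone : IsCone K) (hK_closed : IsClosed K) (hK_conv : Convex ℝ K)
    (D : Set E₁) (hD : D.Nonempty) (F : E₁ → E₂)
    (hF_scal : ∀ v ∈ -polarCone K,
      EClosed (scal v D F) ∧ EProper (scal v D F) ∧ EConvexOn (scal v D F))
    (g : E₂ → EReal) (hg_closed : EClosed g) (hg_proper : EProper g) (hg_conv : EConvexOn g)
    (hg_mono : ∀ u v : E₂, v - u ∈ K → g u ≤ g v) :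
    EClosed (compFn g D F) ∧ EConvexOn (compFn g D F) ∧
    ((F '' D ∩ edom g).Nonempty →
      EClosed (compFn g D F) ∧ EProper (compFn g D F) ∧ EConvexOn (compFn g D F)) :=
  composite_closed_proper_convex_general K hK_cone D F hF_scal g hg_closed hg_proper hg_conv hg_mono
end
end

section
/- Let K ⊆ E₂ be a closed, convex cone, let F be K-convex with nonempty domain dom F ⊆ E₁, and let g : E₂ → ℝ ∪ {+∞} be proper and convex satisfying condition (M): g(F(x)) ≤ g(y) for every (x,y) ∈ epi_K F. Define η : E₁ → ℝ ∪ {±∞} by η(p) = inf_{v ∈ −K°} (g*(v) + (⟨v,F⟩)*(p)). Then (g ∘ F)* ≤ cl η pointwise. Moreover, equality (g ∘ F)* = cl η holds if, in addition, ⟨v,F⟩ is closed, proper and convex for all v ∈ −K°, g is lower semicontinuous and K-increasing, and rge F ∩ dom g ≠ ∅. -/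
open scoped RealInnerProductSpace Pointwise
open Filter

noncomputable section

variable {E E₁ E₂ : Type*}
  [NormedAddCommGroup E] [InnerProductSpace ℝ E] [FiniteDimensional ℝ E]
  [NormedAddCommGroup E₁] [InnerProductSpace ℝ E₁] [FiniteDimensional ℝ E₁]
  [NormedAddCommGroup E₂] [InnerProductSpace ℝ E₂] [FiniteDimensional ℝ E₂]

/-!
Weak duality `⟪p, x⟫ - g (F x) ≤ g* v + ⟨v, F⟩* p` gives `(g ∘ F)* ≤ η`, and a conjugate is
lower semicontinuous, so `(g ∘ F)* ≤ cl η`.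

For the converse, `η` is convex (an infimum over `v` of a function jointly convex in `(v, p)`)
and is minorized by the affine function `⟪x₀, ·⟫ - g (F x₀)` for any `x₀ ∈ dom F` with
`F x₀ ∈ dom g`, so `cl η ≤ η**`. Biconjugating each scalarization shows `η* ≥ g ∘ F`: off
`dom F` some `v ∈ -K°` has `g* v < ∞`, and on `dom F` the supremum defining
`g** (F x) = g (F x)` may be restricted to `-K°` because `g* = +∞` outside `-K°` when `g` is
`K`-increasing. Hence `cl η ≤ η** ≤ (g ∘ F)*`.
-/

def epigraph {E : Type*} (f : E → EReal) : Set (E × ℝ) := {p | f p.1 ≤ p.2}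

namespace EReal

lemma coe_sub_le_coe_iff {b c : ℝ} {e : EReal} :
    (b : EReal) - e ≤ c ↔ ((b - c : ℝ) : EReal) ≤ e := by
  induction e using EReal.rec with
  | bot => simp only [coe_sub_bot, top_le_iff, le_bot_iff, coe_ne_top, coe_ne_bot]
  | coe e => norm_cast; constructor <;> intro h <;> linarith
  | top => simp [sub_top]

lemma coe_sub_eq_sub_add_coe (a b : ℝ) (e : EReal) :
    (a : EReal) - e = ((b : EReal) - e) + ((a - b : ℝ) : EReal) := by
  induction e using EReal.rec with
  | bot => rw [coe_sub_bot, coe_sub_bot, top_add_coe]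
  | coe e => norm_cast; ring
  | top => simp [sub_top]

lemma coe_sub_sub_coe (b c : ℝ) (e : EReal) : (b : EReal) - e - c = b - (c + e) := by
  induction e using EReal.rec with
  | bot => simp
  | coe e => norm_cast; ring
  | top => simp [sub_top]

lemma exists_coe_le_coe_le_add_lt {x y : EReal} {r : ℝ} (hx : x ≠ ⊥) (hy : y ≠ ⊥)
    (h : x + y < r) : ∃ G H : ℝ, x ≤ G ∧ y ≤ H ∧ G + H < r := by
  induction x using EReal.rec with
  | bot => exact absurd rfl hx
  | top => simp [top_add_of_ne_bot hy] at h
  | coe G =>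
    induction y using EReal.rec with
    | bot => exact absurd rfl hy
    | top => simp at h
    | coe H => exact ⟨G, H, le_rfl, le_rfl, by exact_mod_cast h⟩

lemma continuous_coe_sub_const (c : EReal) : Continuous fun t : ℝ => (t : EReal) - c := by
  induction c using EReal.rec with
  | bot => simpa only [coe_sub_bot] using continuous_const
  | coe c =>
    simp only [← coe_sub]
    exact continuous_coe_real_ereal.comp (continuous_sub_right c)
  | top => simpa only [sub_top] using continuous_const

end EReal

lemma econvexOn_of_forall_lt {E : Type*} [AddCommGroup E] [Module ℝ E] {f : E → EReal}
    (h : ∀ ⦃p q : E⦄ ⦃α β a b : ℝ⦄, 0 ≤ a → 0 ≤ b → a + b = 1 → f p < α → f q < β →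
      f (a • p + b • q) ≤ ((a * α + b * β : ℝ) : EReal)) :
    EConvexOn f := by
  rintro ⟨p, s⟩ (hp : f p ≤ s) ⟨q, t⟩ (hq : f q ≤ t) a b ha hb hab
  change f (a • p + b • q) ≤ ((a * s + b * t : ℝ) : EReal)
  refine EReal.le_of_forall_lt_iff_le.1 fun z hz => ?_
  set ε := z - (a * s + b * t)
  have hε : 0 < ε := sub_pos.2 (EReal.coe_lt_coe_iff.1 hz)
  convert h ha hb hab (hp.trans_lt (EReal.coe_lt_coe_iff.2 (lt_add_of_pos_right s hε)))
    (hq.trans_lt (EReal.coe_lt_coe_iff.2 (lt_add_of_pos_right t hε))) using 2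
  linear_combination (-ε) * hab

lemma coe_le_of_forall_mem_epigraph {E : Type*} {f : E → EReal} {z : E} {a : ℝ}
    (h : ∀ t : ℝ, (z, t) ∈ epigraph f → a ≤ t) : (a : EReal) ≤ f z :=
  EReal.le_of_forall_lt_iff_le.1 fun t ht => EReal.coe_le_coe_iff.2 (h t ht.le)

section Conjugate

variable {E : Type*} [NormedAddCommGroup E] [InnerProductSpace ℝ E]

lemma le_econj (f : E → EReal) (y z : E) : ((⟪y, z⟫ : ℝ) : EReal) - f z ≤ econj f y :=
  le_iSup (fun z => ((⟪y, z⟫ : ℝ) : EReal) - f z) z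

lemma econj_le_coe_iff {f : E → EReal} {y : E} {c : ℝ} :
    econj f y ≤ c ↔ ∀ z, ((⟪y, z⟫ - c : ℝ) : EReal) ≤ f z := by
  simp only [econj, iSup_le_iff, EReal.coe_sub_le_coe_iff]

lemma econj_le_econj {f₁ f₂ : E → EReal} (h : ∀ z, f₁ z ≤ f₂ z) (y : E) :
    econj f₂ y ≤ econj f₁ y :=
  iSup_mono fun z => EReal.sub_le_sub le_rfl (h z)

lemma econj_ne_bot {f : E → EReal} (hf : ∃ z, f z < ⊤) (y : E) : econj f y ≠ ⊥ := by
  obtain ⟨z, hz⟩ := hf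
  refine ne_bot_of_le_ne_bot ?_ (le_econj f y z)
  generalize f z = e at hz ⊢
  induction e using EReal.rec with
  | bot => simp
  | coe m => exact EReal.coe_ne_bot _
  | top => exact absurd hz (lt_irrefl _)

lemma econj_lowerSemicontinuous (f : E → EReal) : LowerSemicontinuous (econj f) :=
  lowerSemicontinuous_iSup fun z => ((EReal.continuous_coe_sub_const (f z)).comp
    (continuous_id.inner continuous_const)).lowerSemicontinuous

lemma econj_sub_le_econj_of_le_add {f h : E → EReal} {c : EReal} (hle : ∀ q, f q ≤ c + h q)
    (x : E) : econj h x - c ≤ econj f x := by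
  induction c using EReal.rec with
  | bot =>
    have h0 : f 0 = ⊥ := le_bot_iff.1 (by simpa using hle 0)
    calc _ ≤ ((⟪x, 0⟫ : ℝ) : EReal) - f 0 := by rw [h0, EReal.coe_sub_bot]; exact le_top
      _ ≤ econj f x := le_econj f x 0
  | top => rw [EReal.sub_top]; exact bot_le
  | coe c =>
    rw [EReal.sub_le_iff_le_add (by simp) (by simp)]
    refine iSup_le fun q => ?_
    rw [← EReal.sub_le_iff_le_add (by simp) (by simp), EReal.coe_sub_sub_coe]
    exact (EReal.sub_le_sub le_rfl (hle q)).trans (le_econj f x q)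

lemma econj_convexComb_le {f : E → EReal} {y₁ y₂ : E} {G₁ G₂ a b : ℝ}
    (h₁ : econj f y₁ ≤ G₁) (h₂ : econj f y₂ ≤ G₂) (ha : 0 ≤ a) (hb : 0 ≤ b) (hab : a + b = 1) :
    econj f (a • y₁ + b • y₂) ≤ ((a * G₁ + b * G₂ : ℝ) : EReal) := by
  rw [econj_le_coe_iff] at h₁ h₂ ⊢
  intro z
  have hcomb : ⟪a • y₁ + b • y₂, z⟫ - (a * G₁ + b * G₂)
      = a • (⟪y₁, z⟫ - G₁) + b • (⟪y₂, z⟫ - G₂) := by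
    simp only [inner_add_left, real_inner_smul_left, smul_eq_mul]; ring
  rw [hcomb]
  refine (EReal.coe_le_coe_iff.2 (Convex.combo_le_max _ _ ha hb hab)).trans ?_
  rw [EReal.coe_strictMono.monotone.map_max]
  exact max_le (h₁ z) (h₂ z)

/-- The minorant can be tilted by any multiple of `⟪y, ·⟫ - c`, which is `≤ 0` on `dom f` and
positive at `x`. -/
lemma econj_econj_eq_top_of_dom_subset_halfSpace {f : E → EReal} {y₀ : E} {c₀ : ℝ}
    (hmin : ∀ z, ((⟪y₀, z⟫ - c₀ : ℝ) : EReal) ≤ f z) {y x : E} {c : ℝ}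
    (hdom : ∀ z, f z < ⊤ → ⟪y, z⟫ ≤ c) (hc : c < ⟪y, x⟫) : econj (econj f) x = ⊤ := by
  refine (EReal.eq_top_iff_forall_lt _).2 fun R => ?_
  obtain ⟨n, hn⟩ := exists_nat_gt ((R - (⟪y₀, x⟫ - c₀)) / (⟪y, x⟫ - c))
  rw [div_lt_iff₀ (sub_pos.2 hc)] at hn
  have hw : econj f (y₀ + (n : ℝ) • y) ≤ ((c₀ + n * c : ℝ) : EReal) := by
    refine econj_le_coe_iff.2 fun z => ?_
    rcases eq_top_or_lt_top (f z) with hz | hz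
    · rw [hz]; exact le_top
    refine le_trans (EReal.coe_le_coe_iff.2 ?_) (hmin z)
    rw [inner_add_left, real_inner_smul_left]
    nlinarith [hdom z hz, n.cast_nonneg (α := ℝ)]
  calc (R : EReal) < ((⟪x, y₀ + (n : ℝ) • y⟫ - (c₀ + n * c) : ℝ) : EReal) := by
        rw [EReal.coe_lt_coe_iff, inner_add_right, real_inner_smul_right, real_inner_comm y₀,
          real_inner_comm y]
        linarith
    _ ≤ econj (econj f) x := by
        rw [EReal.coe_sub]
        exact (EReal.sub_le_sub le_rfl hw).trans (le_econj _ x _)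

end Conjugate

section LscHull

variable {E : Type*} [TopologicalSpace E]

lemma LowerSemicontinuous.le_lscHull {h f : E → EReal} (hh : LowerSemicontinuous h)
    (hle : ∀ z, h z ≤ f z) (x : E) : h x ≤ lscHull f x := by
  refine le_sInf ?_
  rintro a ⟨u, hu, hfu⟩
  refine le_of_forall_lt_imp_le_of_dense fun b hb => ?_
  exact ge_of_tendsto hfu ((hu.eventually (hh x b hb)).mono fun n hn => hn.le.trans (hle _))

lemma lscHull_le_of_mem_closure [FirstCountableTopology E] {f : E → EReal} {x : E} {r : ℝ}
    (h : (x, r) ∈ closure (epigraph f)) : lscHull f x ≤ r := by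
  obtain ⟨u, hu, hlim⟩ := mem_closure_iff_seq_limit.1 h
  obtain ⟨a, φ, hφ, ha⟩ := CompactSpace.tendsto_subseq fun n => f (u n).1
  have hx : Tendsto (fun n => (u (φ n)).1) atTop (nhds x) :=
    ((continuous_fst.tendsto _).comp hlim).comp hφ.tendsto_atTop
  have hr : Tendsto (fun n => ((u (φ n)).2 : EReal)) atTop (nhds r) :=
    (continuous_coe_real_ereal.tendsto _).comp
      (((continuous_snd.tendsto _).comp hlim).comp hφ.tendsto_atTop)
  calc lscHull f x ≤ a := sInf_le ⟨_, hx, ha⟩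
    _ ≤ r := le_of_tendsto_of_tendsto' ha hr fun n => hu (φ n)

end LscHull

section Biconjugate

variable {E : Type*} [NormedAddCommGroup E] [InnerProductSpace ℝ E] [CompleteSpace E]

lemma exists_separation_of_notMem_closure_epigraph {f : E → EReal} (hf : EConvexOn f)
    {x : E} {r : ℝ} (hx : (x, r) ∉ closure (epigraph f)) :
    (∃ y c, (∀ z, ((⟪y, z⟫ - c : ℝ) : EReal) ≤ f z) ∧ r < ⟪y, x⟫ - c) ∨
      ∃ y c, (∀ z, f z < ⊤ → ⟪y, z⟫ ≤ c) ∧ c < ⟪y, x⟫ := by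
  obtain ⟨φ, u, hφC, hφx⟩ := geometric_hahn_banach_closed_point hf.closure isClosed_closure hx
  set y := (InnerProductSpace.toDual ℝ E).symm (φ.comp (ContinuousLinearMap.inl ℝ E ℝ))
  set s := φ (0, 1)
  have hφ : ∀ z t, φ (z, t) = ⟪y, z⟫ + s * t := fun z t => by
    rw [InnerProductSpace.toDual_symm_apply,
      show (z, t) = (z, 0) + t • ((0 : E), (1 : ℝ)) by simp, map_add, map_smul, smul_eq_mul]
    simp only [ContinuousLinearMap.comp_apply, ContinuousLinearMap.inl_apply, s, mul_comm]
  have hepi : ∀ z (t : ℝ), f z ≤ t → ⟪y, z⟫ + s * t < u := fun z t h =>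
    hφ z t ▸ hφC _ (subset_closure h)
  rw [hφ] at hφx
  rcases lt_trichotomy s 0 with hs | hs | hs
  · have hs' : 0 < -s := neg_pos.2 hs
    refine Or.inl ⟨(-s)⁻¹ • y, (-s)⁻¹ * u,
      fun z => coe_le_of_forall_mem_epigraph fun t ht => ?_, ?_⟩
    · rw [real_inner_smul_left, ← mul_sub, inv_mul_le_iff₀ hs']
      linarith [hepi z t ht]
    · rw [real_inner_smul_left, ← mul_sub, lt_inv_mul_iff₀ hs']
      linarith
  · refine Or.inr ⟨y, u, fun z hz => ?_, by simpa [hs] using hφx⟩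
    obtain ⟨t, ht, -⟩ := EReal.exists_between_coe_real hz
    simpa [hs] using (hepi z t ht.le).le
  · have htop : ∀ z, f z = ⊤ := fun z => by
      by_contra hz
      obtain ⟨t, ht, -⟩ := EReal.exists_between_coe_real (lt_top_iff_ne_top.2 hz)
      obtain ⟨n, hn⟩ := exists_nat_gt ((u - ⟪y, z⟫ - s * t) / s)
      rw [div_lt_iff₀ hs] at hn
      have := hepi z (t + n)
        (ht.le.trans (EReal.coe_le_coe_iff.2 (le_add_of_nonneg_right n.cast_nonneg)))
      linarith
    exact Or.inl ⟨0, -r - 1, fun z => (htop z).symm ▸ le_top, by simp⟩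

lemma exists_affine_minorant {f : E → EReal} (hcl : EClosed f) (hpr : EProper f)
    (hcv : EConvexOn f) : ∃ y c, ∀ z, ((⟪y, z⟫ - c : ℝ) : EReal) ≤ f z := by
  obtain ⟨⟨x₀, hx₀⟩, hbot⟩ := hpr
  obtain ⟨m, hm⟩ : ∃ m : ℝ, f x₀ = m := ⟨_, (EReal.coe_toReal hx₀.ne (hbot x₀)).symm⟩
  have hnot : (x₀, m - 1) ∉ closure (epigraph f) := by
    rw [(IsClosed.closure_eq hcl : closure (epigraph f) = epigraph f)]
    intro h
    change f x₀ ≤ ((m - 1 : ℝ) : EReal) at h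
    rw [hm, EReal.coe_le_coe_iff] at h
    linarith
  rcases exists_separation_of_notMem_closure_epigraph hcv hnot with
    ⟨y, c, hyc, -⟩ | ⟨y, c, hdom, hc⟩
  · exact ⟨y, c, hyc⟩
  · exact absurd (hdom x₀ hx₀) (not_le.2 hc)

lemma le_econj_econj_of_notMem_closure {f : E → EReal} (hcv : EConvexOn f)
    (hmin : ∃ y₀ c₀, ∀ z, ((⟪y₀, z⟫ - c₀ : ℝ) : EReal) ≤ f z) {x : E} {r : ℝ}
    (hx : (x, r) ∉ closure (epigraph f)) : (r : EReal) ≤ econj (econj f) x := by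
  rcases exists_separation_of_notMem_closure_epigraph hcv hx with
    ⟨y, c, hyc, hr⟩ | ⟨y, c, hdom, hc⟩
  · calc (r : EReal) ≤ ((⟪x, y⟫ - c : ℝ) : EReal) := by
          rw [real_inner_comm]; exact EReal.coe_le_coe_iff.2 hr.le
      _ ≤ econj (econj f) x := by
          rw [EReal.coe_sub]
          exact (EReal.sub_le_sub le_rfl (econj_le_coe_iff.2 hyc)).trans (le_econj _ x y)
  · obtain ⟨y₀, c₀, h₀⟩ := hmin
    rw [econj_econj_eq_top_of_dom_subset_halfSpace h₀ hdom hc]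
    exact le_top

lemma le_econj_econj {f : E → EReal} (hcl : EClosed f) (hpr : EProper f) (hcv : EConvexOn f)
    (x : E) : f x ≤ econj (econj f) x :=
  EReal.ge_of_forall_gt_iff_ge.1 fun r hr =>
    le_econj_econj_of_notMem_closure hcv (exists_affine_minorant hcl hpr hcv)
      (by rw [(IsClosed.closure_eq hcl : closure (epigraph f) = epigraph f)]; exact hr.not_ge)

lemma lscHull_le_econj_econj {f : E → EReal} (hcv : EConvexOn f)
    (hmin : ∃ y c, ∀ z, ((⟪y, z⟫ - c : ℝ) : EReal) ≤ f z) (x : E) :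
    lscHull f x ≤ econj (econj f) x :=
  EReal.le_of_forall_lt_iff_le.1 fun r hr => lscHull_le_of_mem_closure <| by
    by_contra h
    exact (le_econj_econj_of_notMem_closure hcv hmin h).not_gt hr

end Biconjugate

section Composite

variable {E₁ E₂ : Type*} [NormedAddCommGroup E₁] [InnerProductSpace ℝ E₁]
  [NormedAddCommGroup E₂] [InnerProductSpace ℝ E₂]

lemma polarCone_convex (K : Set E₂) : Convex ℝ (polarCone K) := by
  intro u hu w hw a b ha hb _ x hx
  rw [inner_add_left, real_inner_smul_left, real_inner_smul_left]
  exact add_nonpos (mul_nonpos_of_nonneg_of_nonpos ha (hu x hx))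
    (mul_nonpos_of_nonneg_of_nonpos hb (hw x hx))

/-- For `k ∈ K` with `⟪v, k⟫ < 0`, `g (u - t • k) ≤ g u` while `⟪v, u - t • k⟫ → ∞`. -/
lemma econj_eq_top_of_notMem_neg_polarCone {K : Set E₂} (hK : IsCone K) {g : E₂ → EReal}
    (hg : ∃ u, g u < ⊤) (hinc : ∀ u v : E₂, v - u ∈ K → g u ≤ g v) {v : E₂}
    (hv : v ∉ -polarCone K) : econj g v = ⊤ := by
  obtain ⟨k, hk, hvk⟩ : ∃ k ∈ K, ⟪v, k⟫ < 0 := by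
    simpa [polarCone, inner_neg_left] using hv
  obtain ⟨u, hu⟩ := hg
  obtain ⟨m, hm, -⟩ := EReal.exists_between_coe_real hu
  refine (EReal.eq_top_iff_forall_lt _).2 fun R => ?_
  obtain ⟨n, hn⟩ := exists_nat_gt ((R - ⟪v, u⟫ + m) / -⟪v, k⟫)
  rw [div_lt_iff₀ (neg_pos.2 hvk)] at hn
  have hgn : g (u - (n : ℝ) • k) ≤ m :=
    (hinc _ _ (by simpa using hK n.cast_nonneg hk)).trans hm.le
  calc (R : EReal) < ((⟪v, u - (n : ℝ) • k⟫ - m : ℝ) : EReal) := by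
        rw [EReal.coe_lt_coe_iff, inner_sub_right, real_inner_smul_right]
        linarith
    _ ≤ econj g v := by
        rw [EReal.coe_sub]
        exact (EReal.sub_le_sub le_rfl hgn).trans (le_econj g v _)

/-- The function `η` of the statement. -/
def conjCompBound (K : Set E₂) (D : Set E₁) (F : E₁ → E₂) (g : E₂ → EReal) (p : E₁) : EReal :=
  ⨅ v ∈ -polarCone K, (econj g v + econj (scal v D F) p)

lemma econj_compFn_le (g : E₂ → EReal) (D : Set E₁) (F : E₁ → E₂) (v : E₂) (p : E₁) :
    econj (compFn g D F) p ≤ econj g v + econj (scal v D F) p := by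
  refine iSup_le fun x => ?_
  by_cases hx : x ∈ D
  · have hs : ((⟪p, x⟫ : ℝ) : EReal) - scal v D F x = ((⟪p, x⟫ - ⟪v, F x⟫ : ℝ) : EReal) := by
      rw [scal, if_pos hx, EReal.coe_sub]
    rw [compFn, if_pos hx, EReal.coe_sub_eq_sub_add_coe _ ⟪v, F x⟫, ← hs]
    exact add_le_add (le_econj g v (F x)) (le_econj _ p x)
  · rw [compFn, if_neg hx, EReal.sub_top]
    exact bot_le

lemma econj_compFn_le_conjCompBound (K : Set E₂) (D : Set E₁) (F : E₁ → E₂) (g : E₂ → EReal)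
    (p : E₁) : econj (compFn g D F) p ≤ conjCompBound K D F g p :=
  le_iInf₂ fun v _ => econj_compFn_le g D F v p

lemma econj_scal_convexComb_le {D : Set E₁} {F : E₁ → E₂} {v₁ v₂ : E₂} {p q : E₁}
    {H₁ H₂ a b : ℝ} (h₁ : econj (scal v₁ D F) p ≤ H₁) (h₂ : econj (scal v₂ D F) q ≤ H₂)
    (ha : 0 ≤ a) (hb : 0 ≤ b) :
    econj (scal (a • v₁ + b • v₂) D F) (a • p + b • q) ≤ ((a * H₁ + b * H₂ : ℝ) : EReal) := by
  rw [econj_le_coe_iff] at h₁ h₂ ⊢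
  intro z
  by_cases hz : z ∈ D
  · have e₁ := h₁ z
    have e₂ := h₂ z
    simp only [scal, if_pos hz, EReal.coe_le_coe_iff, inner_add_left, real_inner_smul_left]
      at e₁ e₂ ⊢
    nlinarith [mul_le_mul_of_nonneg_left e₁ ha, mul_le_mul_of_nonneg_left e₂ hb]
  · simp only [scal, if_neg hz, le_top]

lemma exists_of_conjCompBound_lt {K : Set E₂} {D : Set E₁} {F : E₁ → E₂} {g : E₂ → EReal}
    (hg : ∃ u, g u < ⊤) (hD : D.Nonempty) {p : E₁} {α : ℝ} (h : conjCompBound K D F g p < α) :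
    ∃ v ∈ -polarCone K, ∃ G H : ℝ,
      econj g v ≤ G ∧ econj (scal v D F) p ≤ H ∧ G + H < α := by
  obtain ⟨v, hv, hlt⟩ : ∃ v ∈ -polarCone K, econj g v + econj (scal v D F) p < α := by
    simpa only [conjCompBound, iInf_lt_iff, exists_prop] using h
  obtain ⟨x, hx⟩ := hD
  have hscal : ∃ z, scal v D F z < ⊤ := ⟨x, by simp [scal, hx]⟩
  exact ⟨v, hv, EReal.exists_coe_le_coe_le_add_lt (econj_ne_bot hg v) (econj_ne_bot hscal p) hlt⟩

lemma conjCompBound_econvexOn (K : Set E₂) (F : E₁ → E₂) {D : Set E₁} {g : E₂ → EReal}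
    (hg : ∃ u, g u < ⊤) (hD : D.Nonempty) : EConvexOn (conjCompBound K D F g) := by
  refine econvexOn_of_forall_lt fun p q α β a b ha hb hab hp hq => ?_
  obtain ⟨v₁, hv₁, G₁, H₁, hG₁, hH₁, hα⟩ := exists_of_conjCompBound_lt hg hD hp
  obtain ⟨v₂, hv₂, G₂, H₂, hG₂, hH₂, hβ⟩ := exists_of_conjCompBound_lt hg hD hq
  calc conjCompBound K D F g (a • p + b • q)
      ≤ econj g (a • v₁ + b • v₂) + econj (scal (a • v₁ + b • v₂) D F) (a • p + b • q) :=
        iInf₂_le _ ((polarCone_convex K).neg hv₁ hv₂ ha hb hab)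
    _ ≤ ((a * G₁ + b * G₂ : ℝ) : EReal) + ((a * H₁ + b * H₂ : ℝ) : EReal) :=
        add_le_add (econj_convexComb_le hG₁ hG₂ ha hb hab) (econj_scal_convexComb_le hH₁ hH₂ ha hb)
    _ ≤ ((a * α + b * β : ℝ) : EReal) := by
        rw [← EReal.coe_add, EReal.coe_le_coe_iff]
        nlinarith [mul_le_mul_of_nonneg_left hα.le ha, mul_le_mul_of_nonneg_left hβ.le hb]

lemma compFn_le_econj_conjCompBound [CompleteSpace E₁] [CompleteSpace E₂] {K : Set E₂}
    (hK : IsCone K) {D : Set E₁} {F : E₁ → E₂} {g : E₂ → EReal} (hg_cl : EClosed g)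
    (hg_proper : EProper g) (hg_conv : EConvexOn g) (hinc : ∀ u v : E₂, v - u ∈ K → g u ≤ g v)
    (hsc : ∀ v ∈ -polarCone K,
      EClosed (scal v D F) ∧ EProper (scal v D F) ∧ EConvexOn (scal v D F)) (x : E₁) :
    compFn g D F x ≤ econj (conjCompBound K D F g) x := by
  have key : ∀ v ∈ -polarCone K, scal v D F x - econj g v ≤ econj (conjCompBound K D F g) x :=
    fun v hv => by
      obtain ⟨hcl, hpr, hcv⟩ := hsc v hv
      exact (EReal.sub_le_sub (le_econj_econj hcl hpr hcv x) le_rfl).trans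
        (econj_sub_le_econj_of_le_add (fun q => iInf₂_le v hv) x)
  by_cases hx : x ∈ D
  · rw [compFn, if_pos hx]
    refine (le_econj_econj hg_cl hg_proper hg_conv (F x)).trans (iSup_le fun w => ?_)
    by_cases hw : w ∈ -polarCone K
    · simpa only [scal, if_pos hx, real_inner_comm] using key w hw
    · rw [econj_eq_top_of_notMem_neg_polarCone hK hg_proper.1 hinc hw, EReal.sub_top]
      exact bot_le
  · obtain ⟨y, c, hyc⟩ := exists_affine_minorant hg_cl hg_proper hg_conv
    have hy : econj g y ≤ c := econj_le_coe_iff.2 hyc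
    have hyK : y ∈ -polarCone K := by
      by_contra h
      rw [econj_eq_top_of_notMem_neg_polarCone hK hg_proper.1 hinc h] at hy
      exact EReal.coe_ne_top c (top_le_iff.1 hy)
    have := key y hyK
    rw [scal, if_neg hx, EReal.top_sub (ne_top_of_le_ne_top (EReal.coe_ne_top c) hy)] at this
    rw [compFn, if_neg hx]
    exact this

end Composite

theorem conjugate_le_lscHull_eta_general
    (K : Set E₂) (hK_cone : IsCone K)
    (D : Set E₁) (F : E₁ → E₂)
    (g : E₂ → EReal) (hg_proper : EProper g) (hg_conv : EConvexOn g) :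
    (∀ p : E₁,
      econj (compFn g D F) p
        ≤ lscHull (fun q => ⨅ v ∈ -polarCone K, (econj g v + econj (scal v D F) q)) p) ∧
    ((∀ v ∈ -polarCone K,
        EClosed (scal v D F) ∧ EProper (scal v D F) ∧ EConvexOn (scal v D F)) →
      EClosed g → (∀ u v : E₂, v - u ∈ K → g u ≤ g v) → (F '' D ∩ edom g).Nonempty →
      ∀ p : E₁,
        econj (compFn g D F) p
          = lscHull (fun q => ⨅ v ∈ -polarCone K, (econj g v + econj (scal v D F) q)) p) := by
  have hweak := econj_compFn_le_conjCompBound K D F g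
  have hlow := (econj_lowerSemicontinuous (compFn g D F)).le_lscHull hweak
  refine ⟨hlow, fun hsc hg_cl hinc ⟨_, ⟨x₀, hx₀, hFx₀⟩, hgx₀⟩ p => le_antisymm (hlow p) ?_⟩
  obtain ⟨m, hm⟩ : ∃ m : ℝ, compFn g D F x₀ = m := by
    rw [compFn, if_pos hx₀, hFx₀]
    exact ⟨_, (EReal.coe_toReal (ne_of_lt hgx₀) (hg_proper.2 _)).symm⟩
  have hmin : ∃ y c, ∀ q, ((⟪y, q⟫ - c : ℝ) : EReal) ≤ conjCompBound K D F g q :=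
    ⟨x₀, m, fun q => by
      simpa only [hm, ← EReal.coe_sub, real_inner_comm] using (le_econj _ q x₀).trans (hweak q)⟩
  calc lscHull (conjCompBound K D F g) p
      ≤ econj (econj (conjCompBound K D F g)) p :=
        lscHull_le_econj_econj (conjCompBound_econvexOn K F hg_proper.1 ⟨x₀, hx₀⟩) hmin p
    _ ≤ econj (compFn g D F) p :=
        econj_le_econj (compFn_le_econj_conjCompBound hK_cone hg_cl hg_proper hg_conv hinc hsc) p

/-- Conjugate of a composite function: with
`η(p) = inf_{v ∈ -K°} (g*(v) + ⟨v,F⟩*(p))` one has `(g ∘ F)* ≤ cl η`, with equality if in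
addition the scalarizations are closed, proper and convex, `g` is lsc and `K`-increasing and
`rge F ∩ dom g ≠ ∅`. -/
theorem conjugate_le_lscHull_eta
    (K : Set E₂) (hK_cone : IsCone K) (hK_closed : IsClosed K) (hK_conv : Convex ℝ K)
    (D : Set E₁) (hD : D.Nonempty) (F : E₁ → E₂) (hF : Convex ℝ (epiK K D F))
    (g : E₂ → EReal) (hg_proper : EProper g) (hg_conv : EConvexOn g)
    (hM : ∀ p ∈ epiK K D F, g (F p.1) ≤ g p.2) :
    (∀ p : E₁,
      econj (compFn g D F) p
        ≤ lscHull (fun q => ⨅ v ∈ -polarCone K, (econj g v + econj (scal v D F) q)) p) ∧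
    ((∀ v ∈ -polarCone K,
        EClosed (scal v D F) ∧ EProper (scal v D F) ∧ EConvexOn (scal v D F)) →
      EClosed g → (∀ u v : E₂, v - u ∈ K → g u ≤ g v) → (F '' D ∩ edom g).Nonempty →
      ∀ p : E₁,
        econj (compFn g D F) p
          = lscHull (fun q => ⨅ v ∈ -polarCone K, (econj g v + econj (scal v D F) q)) p) :=
  conjugate_le_lscHull_eta_general K hK_cone D F g hg_proper hg_conv
end
end

section
/- Let g : E₂ → ℝ ∪ {+∞}, let F be a map with domain dom F ⊆ E₁ and values in E₂, and let x̄ ∈ dom(g ∘ F). Then ∂(g ∘ F)(x̄) ⊇ ⋃_{v ∈ ∂g(F(x̄))} ∂(⟨v,F⟩)(x̄). Moreover, equality holds if K ⊆ E₂ is a closed, convex cone, F is K-convex, g is proper and convex and satisfies condition (M): g(F(x)) ≤ g(y) for every (x,y) ∈ epi_K F, and F(ri(dom F)) ∩ ri(dom g − K) ≠ ∅. -/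
/-!
The inclusion `⊇` is the chain `g (F x) ≥ g (F x̄) + ⟪v, F x - F x̄⟫ ≥ g (F x̄) + ⟪w, x - x̄⟫`.

For `⊆`, let `w ∈ ∂(g ∘ F)(x̄)`. By condition (M), the set of pairs `(y, r)` with
`(x, y) ∈ epi_K F` and `r ≤ g (F x̄) + ⟪w, x - x̄⟫` does not meet the strict epigraph of `g`.
Both sets are convex, so in finite dimension some hyperplane with normal `(u, β)`, `β ≥ 0`,
separates them properly. If `β > 0`, then `v = -β⁻¹ • u` is a subgradient of `g` at `F x̄` and
`w ∈ ∂⟨v, F⟩(x̄)`. If `β = 0`, the qualification condition makes `⟪u, ·⟫` constant on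
`dom g - K` and `⟪u, F ·⟫` constant on `dom F`, because a convex function attaining its maximum
at a relative interior point is constant; then the separation is not proper.
-/

open scoped RealInnerProductSpace Pointwise
open Filter

noncomputable section

section LinearAlgebra

variable {W : Type*} [AddCommGroup W] [Module ℝ W]

theorem IsCone.zero_mem {K : Set W} (hK : IsCone K) (hne : K.Nonempty) : (0 : W) ∈ K := by
  obtain ⟨k, hk⟩ := hne
  simpa using hK le_rfl hk

theorem IsCone.map_nonpos_of_map_le {K : Set W} (hK : IsCone K) (f : W →ₗ[ℝ] ℝ) {c : ℝ}
    (hf : ∀ k ∈ K, f k ≤ c) : ∀ k ∈ K, f k ≤ 0 := by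
  intro k hk
  by_contra! hpos
  have h := hf (((|c| + 1) / f k) • k) (hK (by positivity) hk)
  rw [map_smul, smul_eq_mul, div_mul_cancel₀ _ hpos.ne'] at h
  linarith [le_abs_self c]

theorem Submodule.map_eq_zero_of_map_le (q : Submodule ℝ W) (f : W →ₗ[ℝ] ℝ) {c : ℝ}
    (hf : ∀ v ∈ q, f v ≤ c) : ∀ v ∈ q, f v = 0 := by
  have hcone : IsCone (q : Set W) := fun t _ _ hv => q.smul_mem t hv
  have hnonpos := hcone.map_nonpos_of_map_le f hf
  intro v hv
  have := hnonpos (-v) (q.neg_mem hv)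
  rw [map_neg] at this
  linarith [hnonpos v hv]

theorem LinearMap.eq_zero_of_affineSpan_eq_top {U : Set W} (hU : affineSpan ℝ U = ⊤)
    (f : W →ₗ[ℝ] ℝ) (hf : ∀ z ∈ U, f z = 0) : f = 0 := by
  have hle : affineSpan ℝ U ≤ (LinearMap.ker f).toAffineSubspace :=
    affineSpan_le.2 fun z hz => by simpa using hf z hz
  rw [hU, top_le_iff] at hle
  ext x
  have hx : x ∈ (LinearMap.ker f).toAffineSubspace := hle ▸ AffineSubspace.mem_top ℝ W x
  simpa using hx

theorem affineSpan_add_eq_top_of_isCompl {C : Set W} (hC : C.Nonempty) {q : Submodule ℝ W}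
    (hq : IsCompl (affineSpan ℝ C).direction q) : affineSpan ℝ (C + (q : Set W)) = ⊤ := by
  obtain ⟨c₀, hc₀⟩ := hC
  have hCU : C ⊆ C + (q : Set W) := fun c hc => ⟨c, hc, 0, q.zero_mem, add_zero c⟩
  rw [← AffineSubspace.direction_eq_top_iff_of_nonempty
    ⟨c₀, subset_affineSpan ℝ _ (hCU hc₀)⟩, direction_affineSpan, eq_top_iff,
    ← hq.codisjoint.eq_top, direction_affineSpan]
  refine sup_le (vectorSpan_mono ℝ hCU) fun v hv => ?_
  have hv' : c₀ + v ∈ C + (q : Set W) := ⟨c₀, hc₀, v, hv, rfl⟩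
  simpa using vsub_mem_vectorSpan ℝ hv' (hCU hc₀)

end LinearAlgebra

section IntrinsicInterior

variable {W : Type*} [NormedAddCommGroup W] [NormedSpace ℝ W]

theorem exists_add_smul_sub_mem_of_mem_intrinsicInterior {M : Set W} {x z : W}
    (hx : x ∈ intrinsicInterior ℝ M) (hz : z ∈ M) : ∃ ε : ℝ, 0 < ε ∧ x + ε • (x - z) ∈ M := by
  obtain ⟨x, hx, rfl⟩ := hx
  have hline : ∀ t : ℝ, (x : W) + t • ((x : W) - z) ∈ affineSpan ℝ M := fun t => by
    simpa [vsub_eq_sub, vadd_eq_add, add_comm] using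
      AffineSubspace.smul_vsub_vadd_mem _ t x.2 (subset_affineSpan ℝ M hz) x.2
  have hcont : Continuous fun t : ℝ => (⟨_, hline t⟩ : affineSpan ℝ M) := by fun_prop
  have hnear : ∀ᶠ t in nhds (0 : ℝ), (⟨_, hline t⟩ : affineSpan ℝ M) ∈ interior _ :=
    hcont.continuousAt.eventually_mem (by simpa using isOpen_interior.mem_nhds hx)
  obtain ⟨ε, hεM, hε⟩ := ((hnear.filter_mono nhdsWithin_le_nhds).and
    (self_mem_nhdsWithin (s := Set.Ioi (0 : ℝ)))).exists
  exact ⟨ε, hε, interior_subset (s := ((↑) ⁻¹' M : Set (affineSpan ℝ M))) hεM⟩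

theorem ConvexOn.eq_of_isMaxOn_of_mem_intrinsicInterior {M : Set W} {f : W → ℝ}
    (hf : ConvexOn ℝ M f) {x : W} (hx : x ∈ intrinsicInterior ℝ M) (hmax : IsMaxOn f M x)
    {z : W} (hz : z ∈ M) : f z = f x := by
  obtain ⟨ε, hε, hx'⟩ := exists_add_smul_sub_mem_of_mem_intrinsicInterior hx hz
  have hab : 1 / (1 + ε) + ε / (1 + ε) = 1 := by field_simp
  have hb : 0 < ε / (1 + ε) := by positivity
  have hcomb : (1 / (1 + ε)) • (x + ε • (x - z)) + (ε / (1 + ε)) • z = x := by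
    match_scalars <;> field_simp; ring
  have hconv := hf.2 hx' hz (by positivity) hb.le hab
  rw [hcomb, smul_eq_mul, smul_eq_mul] at hconv
  have hx'le := mul_le_mul_of_nonneg_left (hmax hx') (by positivity : (0 : ℝ) ≤ 1 / (1 + ε))
  have hsplit : 1 / (1 + ε) * f x + ε / (1 + ε) * f x = f x := by rw [← add_mul, hab, one_mul]
  exact le_antisymm (hmax hz) (le_of_mul_le_mul_left (by linarith) hb)

end IntrinsicInterior

section ProperSeparation

variable {W : Type*} [NormedAddCommGroup W] [NormedSpace ℝ W] [FiniteDimensional ℝ W]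

theorem exists_properSeparation_zero_of_mem_affineSpan {C : Set W} (hC : Convex ℝ C)
    (hne : C.Nonempty) (h0 : (0 : W) ∉ C) (h0A : (0 : W) ∈ affineSpan ℝ C) :
    ∃ f : StrongDual ℝ W, (∀ z ∈ C, f z ≤ 0) ∧ ∃ z ∈ C, f z < 0 := by
  obtain ⟨q, hq⟩ := (affineSpan ℝ C).direction.exists_isCompl
  set U := C + (q : Set W)
  have hCU : C ⊆ U := fun c hc => ⟨c, hc, 0, q.zero_mem, add_zero c⟩
  have hU : affineSpan ℝ U = ⊤ := affineSpan_add_eq_top_of_isCompl hne hq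
  have h0U : (0 : W) ∉ U := by
    rintro ⟨c, hc, v, hv, hcv⟩
    have hcV : c ∈ (affineSpan ℝ C).direction := by
      simpa using AffineSubspace.vsub_mem_direction (subset_affineSpan ℝ C hc) h0A
    have hcq : c ∈ q := by rw [eq_neg_of_add_eq_zero_left hcv]; exact q.neg_mem hv
    have hc0 : c = 0 := (Submodule.mem_bot ℝ).1 (hq.inf_eq_bot ▸ ⟨hcV, hcq⟩)
    exact h0 (hc0 ▸ hc)
  obtain ⟨f, hf0, hfU⟩ := geometric_hahn_banach_of_nonempty_interior_point
    (hC.add q.convex) (fun h => h0U (interior_subset h))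
    ((hC.add q.convex).interior_nonempty_iff_affineSpan_eq_top.2 hU)
  simp only [map_zero] at hfU
  obtain ⟨c₀, hc₀⟩ := hne
  have hfq : ∀ v ∈ q, f v = 0 := q.map_eq_zero_of_map_le f.toLinearMap (c := -f c₀)
    fun v hv => show f v ≤ -f c₀ by linarith [hfU _ ⟨c₀, hc₀, v, hv, rfl⟩, map_add f c₀ v]
  refine ⟨f, fun z hz => hfU z (hCU hz), ?_⟩
  by_contra! hC0
  refine hf0 (ContinuousLinearMap.coe_injective
    (f.toLinearMap.eq_zero_of_affineSpan_eq_top hU ?_))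
  rintro _ ⟨c, hc, v, hv, rfl⟩
  simp [hfq v hv, le_antisymm (hfU c (hCU hc)) (hC0 c hc)]

theorem exists_properSeparation_zero {C : Set W} (hC : Convex ℝ C) (hne : C.Nonempty)
    (h0 : (0 : W) ∉ C) : ∃ f : StrongDual ℝ W, (∀ z ∈ C, f z ≤ 0) ∧ ∃ z ∈ C, f z < 0 := by
  by_cases h0A : (0 : W) ∈ affineSpan ℝ C
  · exact exists_properSeparation_zero_of_mem_affineSpan hC hne h0 h0A
  obtain ⟨f, u, hfu, hu0⟩ := geometric_hahn_banach_closed_point (AffineSubspace.convex _)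
    (affineSpan ℝ C).closed_of_finiteDimensional h0A
  rw [map_zero] at hu0
  obtain ⟨c₀, hc₀⟩ := hne
  exact ⟨f, fun z hz => ((hfu z (subset_affineSpan ℝ C hz)).trans hu0).le, c₀, hc₀,
    (hfu c₀ (subset_affineSpan ℝ C hc₀)).trans hu0⟩

theorem exists_properSeparation {S T : Set W} (hS : Convex ℝ S) (hT : Convex ℝ T)
    (hSne : S.Nonempty) (hTne : T.Nonempty) (hST : Disjoint S T) :
    ∃ f : StrongDual ℝ W, (∀ s ∈ S, ∀ t ∈ T, f s ≤ f t) ∧ ∃ s ∈ S, ∃ t ∈ T, f s < f t := by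
  have h0 : (0 : W) ∉ S - T := by
    rintro ⟨s, hs, t, ht, hst⟩
    exact hST.ne_of_mem hs ht (sub_eq_zero.1 hst)
  obtain ⟨f, hle, _, ⟨s, hs, t, ht, rfl⟩, hlt⟩ :=
    exists_properSeparation_zero (hS.sub hT) (hSne.sub hTne) h0
  refine ⟨f, fun s hs t ht => ?_, s, hs, t, ht, ?_⟩
  · simpa using hle _ ⟨s, hs, t, ht, rfl⟩
  · simpa using hlt

end ProperSeparation

def strictEpi {E : Type*} (g : E → EReal) : Set (E × ℝ) := {p | g p.1 < p.2}

def relHypograph {E₁ E₂ : Type*} (C : Set (E₁ × E₂)) (h : E₁ → ℝ) : Set (E₂ × ℝ) :=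
  {p | ∃ x, (x, p.1) ∈ C ∧ p.2 ≤ h x}

theorem Convex.relHypograph {E₁ E₂ : Type*} [AddCommGroup E₁] [Module ℝ E₁] [AddCommGroup E₂]
    [Module ℝ E₂] {C : Set (E₁ × E₂)} (hC : Convex ℝ C) {h : E₁ → ℝ}
    (hh : ConcaveOn ℝ Set.univ h) : Convex ℝ (relHypograph C h) := by
  rintro ⟨y, r⟩ ⟨x, hxy, hr⟩ ⟨z, s⟩ ⟨x', hxz, hs⟩ a b ha hb hab
  refine ⟨a • x + b • x', by simpa using hC hxy hxz ha hb hab, ?_⟩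
  calc a * r + b * s ≤ a * h x + b * h x' := by gcongr
    _ ≤ h (a • x + b • x') := hh.2 trivial trivial ha hb hab

section ExtendedConvex

variable {E : Type*} [AddCommGroup E] [Module ℝ E] {g : E → EReal}

theorem EConvexOn.convex_edom (hg : EConvexOn g) : Convex ℝ (edom g) := by
  have : edom g = Prod.fst '' {p : E × ℝ | g p.1 ≤ (p.2 : EReal)} := by
    ext y
    refine ⟨fun hy => ?_, fun ⟨p, hp, hpy⟩ => hpy ▸ hp.trans_lt (EReal.coe_lt_top _)⟩
    obtain ⟨r, hr, -⟩ := EReal.lt_iff_exists_real_btwn.1 hy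
    exact ⟨(y, r), hr.le, rfl⟩
  rw [this]
  exact hg.linear_image (LinearMap.fst ℝ E ℝ)

theorem EConvexOn.convex_strictEpi (hg : EConvexOn g) : Convex ℝ (strictEpi g) := by
  rintro ⟨y, r⟩ hy ⟨z, s⟩ hz a b ha hb hab
  obtain ⟨r', hyr', hr'⟩ := EReal.lt_iff_exists_real_btwn.1 hy
  obtain ⟨s', hzs', hs'⟩ := EReal.lt_iff_exists_real_btwn.1 hz
  have hr : r' < r := EReal.coe_lt_coe_iff.1 hr'
  have hs : s' < s := EReal.coe_lt_coe_iff.1 hs'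
  have hcomb : g (a • y + b • z) ≤ ((a * r' + b * s' : ℝ) : EReal) :=
    hg (x := (y, r')) hyr'.le (y := (z, s')) hzs'.le ha hb hab
  refine hcomb.trans_lt (EReal.coe_lt_coe_iff.2 ?_)
  show a * r' + b * s' < a * r + b * s
  rcases ha.lt_or_eq with ha | rfl
  · nlinarith
  · simp only [zero_add] at hab
    subst hab
    linarith

end ExtendedConvex

theorem exists_inner_add_mul_eq {E : Type*} [NormedAddCommGroup E] [InnerProductSpace ℝ E]
    [CompleteSpace E] (ℓ : StrongDual ℝ (E × ℝ)) :
    ∃ (u : E) (β : ℝ), ∀ p : E × ℝ, ℓ p = ⟪u, p.1⟫ + β * p.2 := by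
  refine ⟨(InnerProductSpace.toDual ℝ E).symm (ℓ.comp (.inl ℝ E ℝ)), ℓ (0, 1), fun p => ?_⟩
  have hvert : ℓ (0, p.2) = p.2 * ℓ (0, 1) := by
    rw [← smul_eq_mul, ← map_smul, Prod.smul_mk, smul_zero, smul_eq_mul, mul_one]
  rw [InnerProductSpace.toDual_symm_apply, ← ℓ.comp_inl_add_comp_inr]
  simp [hvert, mul_comm]

theorem mem_of_compFn_lt_top {E₁ E₂ : Type*} {g : E₂ → EReal} {D : Set E₁} {F : E₁ → E₂}
    {x : E₁} (hx : compFn g D F x < ⊤) : x ∈ D := by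
  by_contra h
  simp [compFn, h] at hx

theorem disjoint_relHypograph_strictEpi {E₁ E₂ : Type*} [AddCommGroup E₂] {g : E₂ → EReal}
    {D : Set E₁} {F : E₁ → E₂} {K : Set E₂} {h : E₁ → ℝ}
    (hM : ∀ p ∈ epiK K D F, g (F p.1) ≤ g p.2) (hh : ∀ x ∈ D, (h x : EReal) ≤ g (F x)) :
    Disjoint (relHypograph (epiK K D F) h) (strictEpi g) := by
  rw [Set.disjoint_left]
  rintro ⟨y, r⟩ ⟨x, hxy, hr⟩ (hlt : g y < r)
  exact (hlt.trans_le ((EReal.coe_le_coe_iff.2 hr).trans ((hh x hxy.1).trans (hM _ hxy)))).false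

section Composite

variable {E₁ E₂ : Type*} [NormedAddCommGroup E₁] [InnerProductSpace ℝ E₁]
  [NormedAddCommGroup E₂] [InnerProductSpace ℝ E₂]
  {g : E₂ → EReal} {D : Set E₁} {F : E₁ → E₂} {K : Set E₂}

theorem esubdiff_scal_subset_esubdiff_compFn {x₀ : E₁} (hx₀ : x₀ ∈ D) {v : E₂}
    (hv : v ∈ esubdiff g (F x₀)) : esubdiff (scal v D F) x₀ ⊆ esubdiff (compFn g D F) x₀ := by
  intro w hw x
  by_cases hx : x ∈ D
  · have hwx : ⟪w, x - x₀⟫ ≤ ⟪v, F x - F x₀⟫ := by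
      have := hw x
      simp only [scal, if_pos hx, if_pos hx₀, ← EReal.coe_add, EReal.coe_le_coe_iff] at this
      simp only [inner_sub_right] at this ⊢
      linarith
    simp only [compFn, if_pos hx, if_pos hx₀]
    exact (add_le_add_right (EReal.coe_le_coe_iff.2 hwx) _).trans (hv (F x))
  · simp [compFn, hx]

theorem convexOn_inner_of_convex_epiK (hepi : Convex ℝ (epiK K D F)) (h0 : (0 : E₂) ∈ K)
    {u : E₂} (hu : ∀ k ∈ K, 0 ≤ ⟪u, k⟫) : ConvexOn ℝ D fun x => ⟪u, F x⟫ := by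
  have hgraph : ∀ x ∈ D, (x, F x) ∈ epiK K D F := fun x hx => ⟨hx, by simpa using h0⟩
  refine ⟨fun x hx y hy a b ha hb hab => (hepi (hgraph x hx) (hgraph y hy) ha hb hab).1,
    fun x hx y hy a b ha hb hab => ?_⟩
  have hK := hu _ (hepi (hgraph x hx) (hgraph y hy) ha hb hab).2
  simp only [Prod.fst_add, Prod.snd_add, Prod.smul_fst, Prod.smul_snd, inner_sub_right,
    inner_add_right, real_inner_smul_right] at hK
  simpa only [smul_eq_mul] using sub_nonneg.1 hK

theorem neg_inv_smul_mem_esubdiff {u y₀ : E₂} {β γ : ℝ} (hβ : 0 < β) (hγ : g y₀ = γ)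
    (hsep : ∀ y, ∀ r : ℝ, g y < r → ⟪u, y₀⟫ + β * γ ≤ ⟪u, y⟫ + β * r) :
    -β⁻¹ • u ∈ esubdiff g y₀ := by
  intro y
  rw [hγ, ← EReal.coe_add]
  refine EReal.le_of_forall_lt_iff_le.1 fun r hr => EReal.coe_le_coe_iff.2 ?_
  have h := hsep y r hr
  refine le_of_mul_le_mul_left ?_ hβ
  rw [real_inner_smul_left, inner_sub_right, mul_add, ← mul_assoc, mul_neg,
    mul_inv_cancel₀ hβ.ne']
  linarith

theorem mem_esubdiff_scal_neg_inv_smul {u : E₂} {w x₀ : E₁} {β γ : ℝ} (hβ : 0 < β)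
    (hx₀ : x₀ ∈ D)
    (hsep : ∀ x ∈ D, ∀ t : ℝ, 0 < t →
      ⟪u, F x⟫ + β * (γ + ⟪w, x - x₀⟫) ≤ ⟪u, F x₀⟫ + β * (γ + t)) :
    w ∈ esubdiff (scal (-β⁻¹ • u) D F) x₀ := by
  intro x
  by_cases hx : x ∈ D
  · simp only [scal, if_pos hx, if_pos hx₀, ← EReal.coe_add, EReal.coe_le_coe_iff]
    refine le_of_forall_pos_le_add fun t ht => le_of_mul_le_mul_left ?_ hβ
    have h := hsep x hx t ht
    simp only [real_inner_smul_left, mul_add, ← mul_assoc, mul_neg, mul_inv_cancel₀ hβ.ne']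
    linarith
  · simp [scal, hx]

theorem inner_eq_of_forall_inner_le (hK : IsCone K) (hKconv : Convex ℝ K)
    (hepi : Convex ℝ (epiK K D F)) (hg : EConvexOn g)
    (hqual : (F '' intrinsicInterior ℝ D ∩ intrinsicInterior ℝ (edom g - K)).Nonempty) {u : E₂}
    (hsep : ∀ p ∈ epiK K D F, ∀ y ∈ edom g, ⟪u, p.2⟫ ≤ ⟪u, y⟫) :
    ∀ p ∈ epiK K D F, ∀ y ∈ edom g, ⟪u, p.2⟫ = ⟪u, y⟫ := by
  obtain ⟨_, ⟨x₁, hx₁, rfl⟩, hFx₁⟩ := hqual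
  obtain ⟨y₁, hy₁, k₁, hk₁, -⟩ := intrinsicInterior_subset hFx₁
  have hx₁D : x₁ ∈ D := intrinsicInterior_subset hx₁
  have h0 : (0 : E₂) ∈ K := hK.zero_mem ⟨k₁, hk₁⟩
  have hgraph : ∀ x ∈ D, (x, F x) ∈ epiK K D F := fun x hx => ⟨hx, by simpa using h0⟩
  have hpolar : ∀ k ∈ K, ⟪u, k⟫ ≤ 0 := hK.map_nonpos_of_map_le (innerₗ E₂ u)
    (c := ⟪u, y₁⟫ - ⟪u, F x₁⟫) fun k hk => by
      have := hsep (x₁, F x₁ + k) ⟨hx₁D, by simpa using hk⟩ y₁ hy₁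
      simp only [innerₗ_apply_apply, inner_add_right] at this ⊢
      linarith
  have hmin : IsMaxOn (fun y => -⟪u, y⟫) (edom g - K) (F x₁) := by
    rintro _ ⟨y, hy, k, hk, rfl⟩
    have : ⟪u, F x₁⟫ ≤ ⟪u, y⟫ := hsep _ (hgraph x₁ hx₁D) y hy
    show -⟪u, y - k⟫ ≤ -⟪u, F x₁⟫
    linarith [inner_sub_right (𝕜 := ℝ) u y k, hpolar k hk]
  have hlin : ConvexOn ℝ (edom g - K) (fun y => -⟪u, y⟫) :=
    (-innerₗ E₂ u).convexOn (hg.convex_edom.sub hKconv)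
  have hconst : ∀ z ∈ edom g - K, ⟪u, z⟫ = ⟪u, F x₁⟫ := fun z hz =>
    neg_inj.1 (hlin.eq_of_isMaxOn_of_mem_intrinsicInterior hFx₁ hmin hz)
  have hdom : ∀ y ∈ edom g, ⟪u, y⟫ = ⟪u, F x₁⟫ := fun y hy => by
    simpa using hconst (y - 0) ⟨y, hy, 0, h0, rfl⟩
  have hperp : ∀ k ∈ K, ⟪u, k⟫ = 0 := fun k hk => by
    have := hconst (y₁ - k) ⟨y₁, hy₁, k, hk, rfl⟩
    rw [inner_sub_right, hdom y₁ hy₁] at this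
    linarith
  have hmax : IsMaxOn (fun x => ⟪u, F x⟫) D x₁ := fun x hx => by
    simpa [hdom y₁ hy₁] using hsep _ (hgraph x hx) y₁ hy₁
  have hconstD : ∀ x ∈ D, ⟪u, F x⟫ = ⟪u, F x₁⟫ := fun x hx =>
    (convexOn_inner_of_convex_epiK hepi h0 fun k hk => (hperp k hk).ge
      ).eq_of_isMaxOn_of_mem_intrinsicInterior hx₁ hmax hx
  rintro ⟨x, y⟩ ⟨hx, hk⟩ z hz
  calc ⟪u, y⟫ = ⟪u, F x⟫ + ⟪u, y - F x⟫ := by rw [← inner_add_right, add_sub_cancel]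
    _ = ⟪u, z⟫ := by rw [hconstD x hx, hperp _ hk, add_zero, hdom z hz]

theorem exists_separation_of_mem_esubdiff_compFn [FiniteDimensional ℝ E₂] (h0 : (0 : E₂) ∈ K)
    (hepi : Convex ℝ (epiK K D F)) (hg : EConvexOn g) (hM : ∀ p ∈ epiK K D F, g (F p.1) ≤ g p.2)
    {x₀ w : E₁} (hx₀ : x₀ ∈ D) {γ : ℝ} (hγ : g (F x₀) = γ) (hw : w ∈ esubdiff (compFn g D F) x₀) :
    ∃ (u : E₂) (β : ℝ), 0 ≤ β ∧
      (∀ p ∈ epiK K D F, ∀ t : ℝ, 0 < t →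
        ⟪u, p.2⟫ + β * (γ + ⟪w, p.1 - x₀⟫) ≤ ⟪u, F x₀⟫ + β * (γ + t)) ∧
      (∀ y, ∀ r : ℝ, g y < r → ⟪u, F x₀⟫ + β * γ ≤ ⟪u, y⟫ + β * r) ∧
      (β = 0 → ∃ p ∈ epiK K D F, ∃ y ∈ edom g, ⟪u, p.2⟫ < ⟪u, y⟫) := by
  have hminor : ∀ x ∈ D, ((γ + ⟪w, x - x₀⟫ : ℝ) : EReal) ≤ g (F x) := fun x hx => by
    simpa [compFn, hx, hx₀, hγ] using hw x
  have haff : ConcaveOn ℝ Set.univ fun x => γ + ⟪w, x - x₀⟫ := by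
    refine ⟨convex_univ, fun x _ y _ a b _ _ hab => le_of_eq ?_⟩
    simp only [smul_eq_mul, inner_sub_right, inner_add_right, real_inner_smul_right]
    linear_combination (γ - ⟪w, x₀⟫) * hab
  have hA₀ : (F x₀, γ) ∈ relHypograph (epiK K D F) fun x => γ + ⟪w, x - x₀⟫ :=
    ⟨x₀, ⟨hx₀, by simpa using h0⟩, by simp⟩
  have hB : ∀ t : ℝ, 0 < t → (F x₀, γ + t) ∈ strictEpi g := fun t ht => by
    show g (F x₀) < ((γ + t : ℝ) : EReal)
    exact hγ ▸ EReal.coe_lt_coe_iff.2 (by linarith)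
  obtain ⟨ℓ, hsep, ⟨a₁, s₁⟩, ⟨x₁, hx₁, -⟩, ⟨y₁, r₁⟩, hyr₁, hlt⟩ :=
    exists_properSeparation (hepi.relHypograph haff) hg.convex_strictEpi ⟨_, hA₀⟩
      ⟨_, hB 1 one_pos⟩ (disjoint_relHypograph_strictEpi hM hminor)
  obtain ⟨u, β, hℓ⟩ := exists_inner_add_mul_eq ℓ
  simp only [hℓ] at hsep hlt
  have hsepB : ∀ y, ∀ r : ℝ, g y < r → ⟪u, F x₀⟫ + β * γ ≤ ⟪u, y⟫ + β * r := fun y r hr =>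
    hsep _ hA₀ (y, r) hr
  refine ⟨u, β, by nlinarith [hsepB (F x₀) (γ + 1) (hB 1 one_pos)],
    fun p hp t ht => hsep (p.2, _) ⟨p.1, hp, le_rfl⟩ _ (hB t ht), hsepB, fun hβ => ?_⟩
  subst hβ
  refine ⟨(x₁, a₁), hx₁, y₁, (show g y₁ < r₁ from hyr₁).trans (EReal.coe_lt_top r₁), ?_⟩
  simpa using hlt

theorem esubdiff_compFn_subset_iUnion [FiniteDimensional ℝ E₂] (hK : IsCone K)
    (hKconv : Convex ℝ K) (hepi : Convex ℝ (epiK K D F)) (hg : EConvexOn g)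
    (hM : ∀ p ∈ epiK K D F, g (F p.1) ≤ g p.2)
    (hqual : (F '' intrinsicInterior ℝ D ∩ intrinsicInterior ℝ (edom g - K)).Nonempty)
    {x₀ : E₁} (hx₀ : x₀ ∈ D) {γ : ℝ} (hγ : g (F x₀) = γ) :
    esubdiff (compFn g D F) x₀ ⊆ ⋃ v ∈ esubdiff g (F x₀), esubdiff (scal v D F) x₀ := by
  intro w hw
  have h0 : (0 : E₂) ∈ K := by
    obtain ⟨_, -, hy⟩ := hqual
    obtain ⟨-, -, k, hk, -⟩ := intrinsicInterior_subset hy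
    exact hK.zero_mem ⟨k, hk⟩
  obtain ⟨u, β, hβ, hsepA, hsepB, hproper⟩ :=
    exists_separation_of_mem_esubdiff_compFn h0 hepi hg hM hx₀ hγ hw
  rcases hβ.lt_or_eq with hβ | hβ
  · exact Set.mem_iUnion₂.2 ⟨_, neg_inv_smul_mem_esubdiff hβ hγ hsepB,
      mem_esubdiff_scal_neg_inv_smul hβ hx₀ fun x hx => hsepA (x, F x) ⟨hx, by simpa using h0⟩⟩
  -- A vertical separating hyperplane contradicts the qualification condition.
  subst hβ
  have hvert : ∀ p ∈ epiK K D F, ∀ y ∈ edom g, ⟪u, p.2⟫ ≤ ⟪u, y⟫ := fun p hp y hy => by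
    obtain ⟨r, hr, -⟩ := EReal.lt_iff_exists_real_btwn.1 hy
    linarith [hsepA p hp 1 one_pos, hsepB y r hr]
  obtain ⟨p, hp, y, hy, hlt⟩ := hproper rfl
  exact absurd (inner_eq_of_forall_inner_le hK hKconv hepi hg hqual hvert p hp y hy) hlt.ne

end Composite

variable {E E₁ E₂ : Type*}
  [NormedAddCommGroup E] [InnerProductSpace ℝ E] [FiniteDimensional ℝ E]
  [NormedAddCommGroup E₁] [InnerProductSpace ℝ E₁] [FiniteDimensional ℝ E₁]
  [NormedAddCommGroup E₂] [InnerProductSpace ℝ E₂] [FiniteDimensional ℝ E₂]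

theorem subdifferential_of_composite_general
    (g : E₂ → EReal) (D : Set E₁) (F : E₁ → E₂)
    (x₀ : E₁) (hx₀ : compFn g D F x₀ < ⊤) :
    (⋃ v ∈ esubdiff g (F x₀), esubdiff (scal v D F) x₀) ⊆ esubdiff (compFn g D F) x₀ ∧
    (∀ K : Set E₂, IsCone K → IsClosed K → Convex ℝ K → Convex ℝ (epiK K D F) →
      EProper g → EConvexOn g →
      (∀ p ∈ epiK K D F, g (F p.1) ≤ g p.2) →
      (F '' intrinsicInterior ℝ D ∩ intrinsicInterior ℝ (edom g - K)).Nonempty →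
      esubdiff (compFn g D F) x₀ = ⋃ v ∈ esubdiff g (F x₀), esubdiff (scal v D F) x₀) := by
  have hx₀D : x₀ ∈ D := mem_of_compFn_lt_top hx₀
  have hsub : (⋃ v ∈ esubdiff g (F x₀), esubdiff (scal v D F) x₀) ⊆
      esubdiff (compFn g D F) x₀ :=
    Set.iUnion₂_subset fun v hv => esubdiff_scal_subset_esubdiff_compFn hx₀D hv
  refine ⟨hsub, fun K hK _ hKconv hepi hproper hg hM hqual => ?_⟩
  have hfin : g (F x₀) = ((g (F x₀)).toReal : EReal) := by
    simp only [compFn, if_pos hx₀D] at hx₀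
    exact (EReal.coe_toReal hx₀.ne (hproper.2 _)).symm
  exact (esubdiff_compFn_subset_iUnion hK hKconv hepi hg hM hqual hx₀D hfin).antisymm hsub

/-- Subdifferential of a composite function:
`∂(g ∘ F)(x₀) ⊇ ⋃_{v ∈ ∂g(F(x₀))} ∂⟨v,F⟩(x₀)`, with equality if `K` is a closed convex cone,
`F` is `K`-convex, `g` is proper, convex, satisfies condition (M) and the qualification
condition `F(ri(dom F)) ∩ ri(dom g - K) ≠ ∅` holds. -/
theorem subdifferential_of_composite
    (g : E₂ → EReal) (D : Set E₁) (F : E₁ → E₂)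
    (x₀ : E₁) (hx₀D : x₀ ∈ D) (hx₀ : compFn g D F x₀ < ⊤) :
    (⋃ v ∈ esubdiff g (F x₀), esubdiff (scal v D F) x₀) ⊆ esubdiff (compFn g D F) x₀ ∧
    (∀ K : Set E₂, IsCone K → IsClosed K → Convex ℝ K → Convex ℝ (epiK K D F) →
      EProper g → EConvexOn g →
      (∀ p ∈ epiK K D F, g (F p.1) ≤ g p.2) →
      (F '' intrinsicInterior ℝ D ∩ intrinsicInterior ℝ (edom g - K)).Nonempty →
      esubdiff (compFn g D F) x₀ = ⋃ v ∈ esubdiff g (F x₀), esubdiff (scal v D F) x₀) :=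
  subdifferential_of_composite_general g D F x₀ hx₀
end
end
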